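/- arXiv:0804.0173 — 13 statements merged into one kernel-verified Lean document; each statement's English description precedes it below -/
import Mathlib

section
/- Let 𝔤 ⊆ gl(E) be a real Lie subalgebra stable under adjoint X ↦ X*. Then the radical of 𝔤 is contained in the center z(𝔤), and consequently [𝔤,𝔤] is semisimple. -/
/-!
With respect to the positive definite trace form `(X, Y) ↦ tr (Y* X)` on `gl(E)`, the adjoint of
`ad Z` is `ad Z*`. Hence on a self-adjoint `𝔤` the orthogonal complement of an ideal is a
complementary ideal, and the rest is lattice theory of ideals. If `D = ⁅I, I⁆` for a solvable ideal
`I`, write `I = D ⊕ W` with `W` an ideal; then `⁅D, W⁆` and `⁅W, W⁆ ⊆ D ∩ W` vanish, so `D` is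
perfect and solvable, i.e. zero. Thus the radical `𝔯` is abelian, and central since a complement
`J` of `𝔯` satisfies `⁅J, 𝔯⁆ ⊆ J ∩ 𝔯 = 0`. Then `[𝔤, 𝔤] = [J, J] ⊆ J`, and a complement of
`[𝔤, 𝔤]` inside `J` is abelian, hence in `𝔯 ∩ J = 0`: so `𝔤 = 𝔯 ⊕ [𝔤, 𝔤]` with `𝔯` central.
Consequently every ideal of `[𝔤, 𝔤]` is an ideal of `𝔤`, and an abelian one lies in `𝔯`.
-/

attribute [local instance 100] LieRing.ofAssociativeRing

namespace LieAlgebra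

open LieSubmodule

variable {R L : Type*} [CommRing R] [LieRing L] [LieAlgebra R L]

lemma lie_eq_bot_of_disjoint {I J : LieIdeal R L} (h : Disjoint I J) : ⁅I, J⁆ = ⊥ :=
  eq_bot_iff.2 <| (lie_le_inf I J).trans h.le_bot

lemma eq_bot_of_isSolvable_of_lie_self_eq_self {I : LieIdeal R L} [IsSolvable I]
    (h : ⁅I, I⁆ = I) : I = ⊥ := by
  obtain ⟨k, hk⟩ := IsSolvable.solvable R I
  have h_series (n : ℕ) : derivedSeriesOfIdeal R L n I = I := by
    induction n with
    | zero => rfl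
    | succ n ih => rw [derivedSeriesOfIdeal_succ, ih, h]
  rwa [LieIdeal.derivedSeries_eq_bot_iff, h_series] at hk

lemma le_radical_of_lie_self_eq_bot [IsNoetherian R L] {I : LieIdeal R L} (h : ⁅I, I⁆ = ⊥) :
    I ≤ radical R L :=
  have : IsLieAbelian I := (lie_abelian_iff_lie_self_eq_bot I).2 h
  (LieIdeal.solvable_iff_le_radical R L I).1 inferInstance

lemma exists_lieIdeal_toSubmodule_eq_map {I J : LieIdeal R L} (hIJ : Codisjoint I J)
    (hJI : ⁅J, I⁆ = ⊥) (A : LieIdeal R I) :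
    ∃ B : LieIdeal R L, B.toSubmodule = A.toSubmodule.map (I.incl : I →ₗ[R] L) := by
  refine ⟨{ toSubmodule := A.toSubmodule.map (I.incl : I →ₗ[R] L), lie_mem := ?_ }, rfl⟩
  rintro x _ ⟨a, ha, rfl⟩
  obtain ⟨y, hy, z, hz, rfl⟩ := (mem_sup I J x).1 (hIJ.eq_top ▸ mem_top x)
  have hza : ⁅z, (a : L)⁆ = 0 := (lie_eq_bot_iff _ _).1 hJI z hz a a.2
  refine ⟨⁅(⟨y, hy⟩ : I), a⁆, A.lie_mem ha, ?_⟩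
  simp only [LieHom.coe_toLinearMap, LieIdeal.incl_apply, add_lie, hza, add_zero]
  rfl

lemma hasTrivialRadical_of_codisjoint {I J : LieIdeal R L} (hIJ : Codisjoint I J)
    (hJI : ⁅J, I⁆ = ⊥) (hI : ∀ B ≤ I, ⁅B, B⁆ = ⊥ → B = ⊥) : HasTrivialRadical R I := by
  rw [hasTrivialRadical_iff_no_abelian_ideals]
  intro A hA
  rw [lie_abelian_iff_lie_self_eq_bot, lie_eq_bot_iff] at hA
  obtain ⟨B, hB⟩ := exists_lieIdeal_toSubmodule_eq_map hIJ hJI A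
  have hBI : B ≤ I := by
    rw [← toSubmodule_le_toSubmodule, hB]
    rintro _ ⟨a, -, rfl⟩
    exact a.2
  have hBB : ⁅B, B⁆ = ⊥ := by
    rw [lie_eq_bot_iff]
    intro x hx y hy
    rw [← mem_toSubmodule, hB, Submodule.mem_map] at hx hy
    obtain ⟨a, ha, rfl⟩ := hx
    obtain ⟨b, hb, rfl⟩ := hy
    rw [LieHom.coe_toLinearMap, ← LieHom.map_lie, hA a ha b hb, map_zero]
  rw [hI B hBI hBB, bot_toSubmodule, ← Submodule.map_bot (I.incl : I →ₗ[R] L)] at hB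
  exact (toSubmodule_eq_bot _).1
    (Submodule.map_injective_of_injective (LieIdeal.incl_injective I) hB).symm

section ComplementedLattice

variable [ComplementedLattice (LieIdeal R L)]

lemma top_lie_eq_lie_self (I : LieIdeal R L) : ⁅(⊤ : LieIdeal R L), I⁆ = ⁅I, I⁆ := by
  obtain ⟨J, hIJ⟩ := exists_isCompl I
  rw [← hIJ.sup_eq_top, sup_lie, lie_eq_bot_of_disjoint hIJ.disjoint.symm, sup_bot_eq]

lemma lie_self_eq_bot_of_isSolvable (I : LieIdeal R L) [IsSolvable I] : ⁅I, I⁆ = ⊥ := by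
  set D := ⁅I, I⁆
  obtain ⟨J, hDJ⟩ := exists_isCompl D
  set W := J ⊓ I
  have hDI : D ≤ I := lie_le_left I I
  have hDW : Disjoint D W := hDJ.disjoint.mono_right inf_le_left
  have hI : D ⊔ W = I := by
    rw [← sup_inf_assoc_of_le J hDI, hDJ.sup_eq_top, top_inf_eq]
  have hWW : ⁅W, W⁆ = ⊥ := by
    have hWW_le_D : ⁅W, W⁆ ≤ D := mono_lie inf_le_right inf_le_right
    exact disjoint_self.1 (hDW.mono hWW_le_D (lie_le_left W W))
  have hD : ⁅D, D⁆ = D := by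
    have h : D = ⁅D ⊔ W, D ⊔ W⁆ := by rw [hI]
    rwa [sup_lie, lie_sup, lie_sup, lie_eq_bot_of_disjoint hDW, lie_eq_bot_of_disjoint hDW.symm,
      hWW, sup_bot_eq, sup_bot_eq, sup_bot_eq, eq_comm] at h
  have : IsSolvable D := le_solvable_ideal_solvable hDI inferInstance
  exact eq_bot_of_isSolvable_of_lie_self_eq_self hD

variable [IsNoetherian R L]

lemma top_lie_radical_eq_bot : ⁅(⊤ : LieIdeal R L), radical R L⁆ = ⊥ := by
  rw [top_lie_eq_lie_self, lie_self_eq_bot_of_isSolvable]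

lemma radical_le_center_of_complementedLattice : radical R L ≤ center R L :=
  (LieModule.le_max_triv_iff_bracket_eq_bot R L L).2 top_lie_radical_eq_bot

lemma isCompl_radical_lie_top :
    IsCompl (radical R L) ⁅(⊤ : LieIdeal R L), (⊤ : LieIdeal R L)⁆ := by
  set S : LieIdeal R L := ⁅(⊤ : LieIdeal R L), (⊤ : LieIdeal R L)⁆
  obtain ⟨J, hRJ⟩ := exists_isCompl (radical R L)
  have hSJ : S ≤ J := calc
    S = ⁅radical R L ⊔ J, (⊤ : LieIdeal R L)⁆ := by rw [hRJ.sup_eq_top]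
    _ = ⁅J, (⊤ : LieIdeal R L)⁆ := by
      rw [sup_lie, lie_comm, top_lie_radical_eq_bot, bot_sup_eq]
    _ ≤ J := lie_le_left _ _
  obtain ⟨K, hSK⟩ := exists_isCompl S
  have hKJ : K ⊓ J = ⊥ := by
    have h_abelian : ⁅K ⊓ J, K ⊓ J⁆ = ⊥ :=
      disjoint_self.1 <|
        hSK.disjoint.mono (mono_lie le_top le_top) ((lie_le_left _ _).trans inf_le_left)
    exact disjoint_self.1 (hRJ.disjoint.mono (le_radical_of_lie_self_eq_bot h_abelian) inf_le_right)
  have hJS : J = S := by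
    rw [← top_inf_eq J, ← hSK.sup_eq_top, sup_inf_assoc_of_le K hSJ, hKJ, sup_bot_eq]
  exact hJS ▸ hRJ

lemma hasTrivialRadical_lie_top :
    HasTrivialRadical R ↥(⁅(⊤ : LieIdeal R L), (⊤ : LieIdeal R L)⁆ : LieIdeal R L) := by
  have hcompl := isCompl_radical_lie_top (R := R) (L := L)
  refine hasTrivialRadical_of_codisjoint hcompl.symm.codisjoint ?_ fun B hB hBB ↦ ?_
  · rw [_root_.eq_bot_iff, ← top_lie_radical_eq_bot, lie_comm]
    exact mono_lie le_top le_rfl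
  · exact disjoint_self.1 (hcompl.disjoint.mono (le_radical_of_lie_self_eq_bot hBB) hB)

end ComplementedLattice

lemma complementedLattice_of_isSymm_of_anisotropic {K L : Type*} [Field K] [LieRing L]
    [LieAlgebra K L] [FiniteDimensional K L] (B : LinearMap.BilinForm K L) (hB_symm : B.IsSymm)
    (hB_aniso : ∀ x, B x x = 0 → x = 0)
    (hB_adj : ∀ z : L, ∃ z' : L, ∀ x y : L, B ⁅z, x⁆ y = B x ⁅z', y⁆) :
    ComplementedLattice (LieIdeal K L) := by
  refine ⟨fun I ↦ ⟨{ B.orthogonal I.toSubmodule with lie_mem := ?_ }, ?_⟩⟩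
  · intro z y hy x hx
    obtain ⟨z', hz'⟩ := hB_adj z
    change B x ⁅z, y⁆ = 0
    rw [hB_symm.eq, hz', hB_symm.eq]
    exact hy _ (I.lie_mem hx)
  · rw [← LieSubmodule.isCompl_toSubmodule]
    refine (LinearMap.BilinForm.isCompl_orthogonal_iff_disjoint hB_symm.isRefl).2 ?_
    exact Submodule.disjoint_def.2 fun x hx hx' ↦ hB_aniso x (hx' x hx)

end LieAlgebra

namespace LinearMap

open scoped InnerProductSpace

variable {E : Type*} [NormedAddCommGroup E] [InnerProductSpace ℝ E] [FiniteDimensional ℝ E]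

noncomputable def frobeniusForm : LinearMap.BilinForm ℝ (Module.End ℝ E) :=
  mk₂ ℝ (fun X Y ↦ trace ℝ E (adjoint Y * X)) (by simp [mul_add]) (by simp)
    (by simp [add_mul]) (by simp)

lemma frobeniusForm_apply (X Y : Module.End ℝ E) :
    frobeniusForm X Y = trace ℝ E (adjoint Y * X) :=
  rfl

lemma frobeniusForm_eq_sum_inner (X Y : Module.End ℝ E) :
    frobeniusForm X Y = ∑ i, ⟪Y (stdOrthonormalBasis ℝ E i), X (stdOrthonormalBasis ℝ E i)⟫_ℝ := by
  simp [frobeniusForm_apply, trace_eq_sum_inner _ (stdOrthonormalBasis ℝ E), adjoint_inner_right]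

lemma frobeniusForm_isSymm : (frobeniusForm (E := E)).IsSymm :=
  ⟨fun X Y ↦ by simp only [frobeniusForm_eq_sum_inner, real_inner_comm]⟩

lemma eq_zero_of_frobeniusForm_self_eq_zero {X : Module.End ℝ E} (h : frobeniusForm X X = 0) :
    X = 0 := by
  rw [frobeniusForm_eq_sum_inner] at h
  have h_basis (i) : X (stdOrthonormalBasis ℝ E i) = 0 :=
    inner_self_eq_zero.1 <|
      (Finset.sum_eq_zero_iff_of_nonneg fun i _ ↦ real_inner_self_nonneg).1 h i (Finset.mem_univ i)
  exact (stdOrthonormalBasis ℝ E).toBasis.ext fun i ↦ by simpa using h_basis i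

lemma frobeniusForm_lie_left (Z X Y : Module.End ℝ E) :
    frobeniusForm ⁅Z, X⁆ Y = frobeniusForm X ⁅adjoint Z, Y⁆ := by
  rw [Ring.lie_def, Ring.lie_def, map_sub, map_sub, LinearMap.sub_apply]
  simp only [frobeniusForm_apply, ← star_eq_adjoint, star_mul, star_star, mul_assoc]
  rw [trace_mul_comm ℝ Z, mul_assoc]

end LinearMap

lemma LieSubalgebra.complementedLattice_of_adjoint_mem {E : Type*} [NormedAddCommGroup E]
    [InnerProductSpace ℝ E] [FiniteDimensional ℝ E] (L : LieSubalgebra ℝ (Module.End ℝ E))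
    (hadj : ∀ X ∈ L, LinearMap.adjoint X ∈ L) : ComplementedLattice (LieIdeal ℝ L) := by
  let ι : L →ₗ[ℝ] Module.End ℝ E := L.incl
  let B : LinearMap.BilinForm ℝ L := LinearMap.frobeniusForm.compl₁₂ ι ι
  have hB (x y : L) : B x y = LinearMap.frobeniusForm (x : Module.End ℝ E) y := rfl
  refine LieAlgebra.complementedLattice_of_isSymm_of_anisotropic B ⟨fun x y ↦ ?_⟩ (fun x hx ↦ ?_)
    fun z ↦ ⟨⟨LinearMap.adjoint z, hadj z z.2⟩, fun x y ↦ ?_⟩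
  · rw [hB, hB, LinearMap.frobeniusForm_isSymm.eq]
  · rw [hB] at hx
    exact Subtype.ext (LinearMap.eq_zero_of_frobeniusForm_self_eq_zero hx)
  · rw [hB, hB, LieSubalgebra.coe_bracket, LieSubalgebra.coe_bracket]
    exact LinearMap.frobeniusForm_lie_left _ _ _

/-- For a real Lie subalgebra `𝔤 ⊆ gl(E)` stable under adjoint, the radical of `𝔤`
is contained in its centre, and `[𝔤,𝔤]` is semisimple (its radical is zero). -/
theorem radical_le_center_of_selfadjoint
    {E : Type*} [NormedAddCommGroup E] [InnerProductSpace ℝ E] [FiniteDimensional ℝ E]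
    (L : LieSubalgebra ℝ (Module.End ℝ E))
    (hadj : ∀ X ∈ L, LinearMap.adjoint X ∈ L) :
    LieAlgebra.radical ℝ L ≤ LieAlgebra.center ℝ L ∧
    LieAlgebra.radical ℝ
      (↥(⁅(⊤ : LieIdeal ℝ L), (⊤ : LieIdeal ℝ L)⁆ : LieIdeal ℝ L)) = ⊥ := by
  have := L.complementedLattice_of_adjoint_mem hadj
  exact ⟨LieAlgebra.radical_le_center_of_complementedLattice,
    LieAlgebra.hasTrivialRadical_lie_top.radical_eq_bot⟩
end

section
/- Let 𝔤 ⊆ gl(E) be a real Lie subalgebra stable under adjoint, and let 𝔯 be a commutative ideal of 𝔤 stable under adjoint. Then 𝔯 is contained in the center of 𝔤. (Key step: for R ∈ 𝔯 and X ∈ 𝔤, the identity ⟨[R,X],[R,X]⟩ = ⟨[R*,[R,X]],X⟩ together with [𝔯,[𝔯,𝔤]] = 0 forces [R,X] = 0.) -/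
open LinearMap in
lemma trace_adjoint_comp_self_eq_zero_iff
    {E : Type*} [NormedAddCommGroup E] [InnerProductSpace ℝ E] [FiniteDimensional ℝ E]
    (T : E →ₗ[ℝ] E) (h : LinearMap.trace ℝ E (LinearMap.adjoint T * T) = 0) : T = 0 := by
  classical
  let b := stdOrthonormalBasis ℝ E
  have htr : LinearMap.trace ℝ E (LinearMap.adjoint T * T)
      = ∑ i, ‖T (b i)‖ ^ 2 := by
    rw [LinearMap.trace_eq_matrix_trace ℝ b.toBasis, Matrix.trace]
    congr 1
    ext i
    rw [Matrix.diag_apply, LinearMap.toMatrix_apply, b.coe_toBasis,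
      b.coe_toBasis_repr_apply, OrthonormalBasis.repr_apply_apply]
    rw [Module.End.mul_apply, LinearMap.adjoint_inner_right, real_inner_self_eq_norm_sq]
  rw [htr] at h
  have hzero : ∀ i, ‖T (b i)‖ ^ 2 = 0 := by
    intro i
    have := Finset.sum_eq_zero_iff_of_nonneg (fun i _ => sq_nonneg ‖T (b i)‖) |>.mp h
    exact this i (Finset.mem_univ i)
  have : ∀ i, T (b i) = 0 := fun i => by
    have := hzero i; simpa [pow_eq_zero_iff] using this
  apply b.toBasis.ext
  intro i
  simpa using this i

/-- A commutative ideal `𝔯` of a Lie subalgebra `𝔤 ⊆ gl(E)` stable under adjoint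
(with `𝔤` itself stable under adjoint) is contained in the centre of `𝔤`. -/
theorem commutative_ideal_le_center
    {E : Type*} [NormedAddCommGroup E] [InnerProductSpace ℝ E] [FiniteDimensional ℝ E]
    (g r : Submodule ℝ (E →ₗ[ℝ] E))
    (hbr : ∀ X ∈ g, ∀ Y ∈ g, X * Y - Y * X ∈ g)
    (hadj : ∀ X ∈ g, LinearMap.adjoint X ∈ g)
    (hrg : r ≤ g)
    (hideal : ∀ X ∈ g, ∀ R ∈ r, X * R - R * X ∈ r)
    (hcomm : ∀ R ∈ r, ∀ S ∈ r, R * S = S * R)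
    (hradj : ∀ R ∈ r, LinearMap.adjoint R ∈ r) :
    ∀ R ∈ r, ∀ X ∈ g, R * X = X * R := by
  intro R hR X hX
  set Y : E →ₗ[ℝ] E := X * R - R * X with hY
  have hYr : Y ∈ r := hideal X hX R hR
  have hRadj : LinearMap.adjoint R ∈ r := hradj R hR
  -- R* commutes with Y
  have hcom : LinearMap.adjoint R * Y = Y * LinearMap.adjoint R := hcomm _ hRadj _ hYr
  -- adjoint Y = R* X* - X* R*
  have hYadj : LinearMap.adjoint Y
      = LinearMap.adjoint R * LinearMap.adjoint X
        - LinearMap.adjoint X * LinearMap.adjoint R := by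
    rw [hY]
    simp [LinearMap.adjoint_comp, Module.End.mul_eq_comp, map_sub]
  have htr : LinearMap.trace ℝ E (LinearMap.adjoint Y * Y) = 0 := by
    rw [hYadj, sub_mul, map_sub]
    have h1 : LinearMap.trace ℝ E (LinearMap.adjoint R * LinearMap.adjoint X * Y)
        = LinearMap.trace ℝ E (LinearMap.adjoint X * LinearMap.adjoint R * Y) := by
      rw [mul_assoc, LinearMap.trace_mul_comm, mul_assoc, ← hcom, ← mul_assoc]
    rw [h1, sub_self]
  have hY0 : Y = 0 := trace_adjoint_comp_self_eq_zero_iff Y htr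
  have h2 : X * R - R * X = 0 := hY0
  exact (sub_eq_zero.mp h2).symm
end

section
/- Let Q be a positive definite quadratic form on a finite-dimensional real vector space V, let H be a Q-selfadjoint endomorphism with ‖H‖_Q ≤ 1, and let 0 < t ≤ 1. Then for every x ∈ V, Q(x) + t·Q(x, Hx) ≤ Q(x, exp(tH)x) ≤ Q(x) + t·Q(x, Hx) + t²·Q(Hx), with equality (in either inequality) if and only if Hx = 0. -/
/-!
Expanding the exponential and moving two factors of `H` onto `x` by self-adjointness,
`Q(x, exp(tH)x) = Q(x) + t Q(x,Hx) + R` with `R = ∑ₙ tⁿ⁺² / (n+2)! · aₙ`, `aₙ = Q(y, Hⁿy)`, `y = Hx`.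
Because `H` is a `Q`-contraction, `2 |Q(u,v)| ≤ Q(u) + Q(v)` gives `|aₙ| ≤ a₀ = Q(y)`, and for
`z = Hᵏy` also `|a₂ₖ₊₁| = |Q(z,Hz)| ≤ Q(z) = a₂ₖ`. Grouping the terms of `R` in consecutive pairs,
every pair is nonnegative and the first one is positive when `y ≠ 0`, so `R > 0`; and
`(n+2)! ≥ 2·3ⁿ` gives `R ≤ (3/4) t² Q(y)`.
-/

open scoped Nat

section ExpRemainder

variable {a : ℕ → ℝ} {t : ℝ}

lemma pow_div_factorial_antitone (ht0 : 0 ≤ t) (ht1 : t ≤ 1) :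
    Antitone fun n : ℕ => t ^ n / n ! := by
  refine antitone_nat_of_succ_le fun n => ?_
  have hn : t / (n + 1) ≤ 1 :=
    div_le_one_of_le₀ (by linarith [n.cast_nonneg (α := ℝ)]) (by positivity)
  calc t ^ (n + 1) / (n + 1)! = t ^ n / n ! * (t / (n + 1)) := by
        rw [pow_succ, Nat.factorial_succ]; push_cast; field_simp
    _ ≤ t ^ n / n ! := mul_le_of_le_one_right (by positivity) hn

lemma summable_pow_add_two_div_factorial_mul {C : ℝ} (ha : ∀ n, |a n| ≤ C) :
    Summable fun n => t ^ (n + 2) / (n + 2)! * a n := by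
  refine .of_norm_bounded (g := fun n => |t| ^ (n + 2) / (n + 2)! * C)
    (((summable_nat_add_iff 2).mpr (Real.summable_pow_div_factorial |t|)).mul_right C) fun n => ?_
  rw [Real.norm_eq_abs, abs_mul, abs_div, abs_pow, Nat.abs_cast]
  exact mul_le_mul_of_nonneg_left (ha n) (by positivity)

lemma tsum_pow_add_two_div_factorial_mul_pos (ht0 : 0 < t) (ht1 : t ≤ 1) (ha0 : 0 < a 0)
    (hbound : ∀ n, |a n| ≤ a 0) (hodd : ∀ k, |a (2 * k + 1)| ≤ a (2 * k)) :
    0 < ∑' n, t ^ (n + 2) / (n + 2)! * a n := by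
  set f := fun n => t ^ (n + 2) / (n + 2)! * a n
  have hf : Summable f := summable_pow_add_two_div_factorial_mul hbound
  have hanti := pow_div_factorial_antitone ht0.le ht1
  have hpair : ∀ k, (t ^ (2 * k + 2) / (2 * k + 2)! - t ^ (2 * k + 3) / (2 * k + 3)!) * a (2 * k)
      ≤ f (2 * k) + f (2 * k + 1) := by
    intro k
    have := neg_abs_le (a (2 * k + 1))
    have := hodd k
    have : (0 : ℝ) ≤ t ^ (2 * k + 3) / (2 * k + 3)! := by positivity
    simp only [f]
    nlinarith
  have hpair_nonneg : ∀ k, 0 ≤ f (2 * k) + f (2 * k + 1) := fun k =>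
    (mul_nonneg (sub_nonneg.mpr (hanti (by omega))) ((abs_nonneg _).trans (hodd k))).trans
      (hpair k)
  have hpair_pos : 0 < f (2 * 0) + f (2 * 0 + 1) := by
    refine lt_of_lt_of_le (mul_pos (sub_pos.mpr ?_) ha0) (hpair 0)
    norm_num [Nat.factorial]
    nlinarith [pow_pos ht0 2]
  have he : Summable fun k => f (2 * k) := hf.comp_injective (mul_right_injective₀ two_ne_zero)
  have ho : Summable fun k => f (2 * k + 1) :=
    hf.comp_injective ((add_left_injective 1).comp (mul_right_injective₀ two_ne_zero))
  rw [← tsum_even_add_odd he ho, ← he.tsum_add ho]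
  exact (he.add ho).tsum_pos hpair_nonneg 0 hpair_pos

lemma tsum_pow_add_two_div_factorial_mul_lt (ht0 : 0 < t) (ht1 : t ≤ 1) (ha0 : 0 < a 0)
    (hbound : ∀ n, |a n| ≤ a 0) :
    ∑' n, t ^ (n + 2) / (n + 2)! * a n < t ^ 2 * a 0 := by
  have hterm : ∀ n, t ^ (n + 2) / (n + 2)! * a n ≤ t ^ 2 * a 0 / 2 * (1 / 3) ^ n := by
    intro n
    have hfact : (2 * 3 ^ n : ℝ) ≤ (n + 2)! := by
      exact_mod_cast (add_comm n 2 ▸ Nat.factorial_mul_pow_le_factorial : 2 ! * 3 ^ n ≤ (n + 2)!)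
    have hpow : t ^ (n + 2) ≤ t ^ 2 := pow_le_pow_of_le_one ht0.le ht1 (by omega)
    calc t ^ (n + 2) / (n + 2)! * a n ≤ t ^ (n + 2) / (n + 2)! * a 0 :=
          mul_le_mul_of_nonneg_left ((le_abs_self _).trans (hbound n)) (by positivity)
      _ ≤ t ^ 2 / (2 * 3 ^ n) * a 0 :=
          mul_le_mul_of_nonneg_right (div_le_div₀ (by positivity) hpow (by positivity) hfact)
            ha0.le
      _ = t ^ 2 * a 0 / 2 * (1 / 3) ^ n := by rw [one_div_pow]; field_simp
  have hgeom := (hasSum_geometric_of_lt_one (r := (1 / 3 : ℝ)) (by norm_num) (by norm_num)).mul_left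
    (t ^ 2 * a 0 / 2)
  calc ∑' n, t ^ (n + 2) / (n + 2)! * a n ≤ t ^ 2 * a 0 / 2 * (1 - 1 / 3)⁻¹ :=
        hasSum_le hterm (summable_pow_add_two_div_factorial_mul hbound).hasSum hgeom
    _ < t ^ 2 * a 0 := by nlinarith [mul_pos (pow_pos ht0 2) ha0]

end ExpRemainder

namespace LinearMap

variable {V : Type*} [AddCommGroup V] [Module ℝ V] (Q : V →ₗ[ℝ] V →ₗ[ℝ] ℝ)

lemma apply_self_nonneg (hpos : ∀ x : V, x ≠ 0 → 0 < Q x x) (u : V) : 0 ≤ Q u u := by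
  rcases eq_or_ne u 0 with rfl | hu
  · simp
  · exact (hpos u hu).le

lemma two_mul_abs_apply_le (hsymm : ∀ x y, Q x y = Q y x) (hpos : ∀ x : V, x ≠ 0 → 0 < Q x x)
    (u v : V) : 2 * |Q u v| ≤ Q u u + Q v v := by
  have hadd := Q.apply_self_nonneg hpos (u + v)
  have hsub := Q.apply_self_nonneg hpos (u - v)
  simp only [map_add, map_sub, LinearMap.add_apply, LinearMap.sub_apply, hsymm v u] at hadd hsub
  rcases abs_cases (Q u v) with ⟨h, -⟩ | ⟨h, -⟩ <;> linarith

variable [TopologicalSpace V] (H : V →L[ℝ] V)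

lemma apply_pow_eq_pow_apply (hsa : ∀ x y, Q x (H y) = Q (H x) y) (n : ℕ) (u v : V) :
    Q u ((H ^ n) v) = Q ((H ^ n) u) v := by
  induction n generalizing u with
  | zero => rfl
  | succ n ih =>
    rw [pow_succ', mul_apply_eq_comp, mul_apply_eq_comp, hsa, ih, ← mul_apply_eq_comp,
      ← mul_apply_eq_comp, ← pow_succ, ← pow_succ']

lemma apply_pow_apply_pow_le (hnorm : ∀ x, Q (H x) (H x) ≤ Q x x) (n : ℕ) (u : V) :
    Q ((H ^ n) u) ((H ^ n) u) ≤ Q u u := by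
  induction n with
  | zero => rfl
  | succ n ih =>
    rw [pow_succ', mul_apply_eq_comp]
    exact (hnorm _).trans ih

lemma abs_apply_pow_le (hsymm : ∀ x y, Q x y = Q y x) (hpos : ∀ x : V, x ≠ 0 → 0 < Q x x)
    (hnorm : ∀ x, Q (H x) (H x) ≤ Q x x) (n : ℕ) (u : V) : |Q u ((H ^ n) u)| ≤ Q u u := by
  linarith [Q.two_mul_abs_apply_le hsymm hpos u ((H ^ n) u), Q.apply_pow_apply_pow_le H hnorm n u]

lemma abs_apply_pow_odd_le (hsymm : ∀ x y, Q x y = Q y x) (hpos : ∀ x : V, x ≠ 0 → 0 < Q x x)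
    (hsa : ∀ x y, Q x (H y) = Q (H x) y) (hnorm : ∀ x, Q (H x) (H x) ≤ Q x x) (k : ℕ) (u : V) :
    |Q u ((H ^ (2 * k + 1)) u)| ≤ Q u ((H ^ (2 * k)) u) := by
  have hodd : Q u ((H ^ (2 * k + 1)) u) = Q ((H ^ k) u) (H ((H ^ k) u)) := by
    rw [show 2 * k + 1 = k + (k + 1) by ring, pow_add, mul_apply_eq_comp,
      Q.apply_pow_eq_pow_apply H hsa, pow_succ', mul_apply_eq_comp]
  have heven : Q u ((H ^ (2 * k)) u) = Q ((H ^ k) u) ((H ^ k) u) := by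
    rw [two_mul, pow_add, mul_apply_eq_comp, Q.apply_pow_eq_pow_apply H hsa]
  rw [hodd, heven]
  simpa only [pow_one] using Q.abs_apply_pow_le H hsymm hpos hnorm 1 ((H ^ k) u)

end LinearMap

section ExpSeries

variable {V : Type*} [NormedAddCommGroup V] [NormedSpace ℝ V]

lemma hasSum_apply_exp_smul_apply [CompleteSpace V] (ℓ : V →L[ℝ] ℝ) (H : V →L[ℝ] V) (t : ℝ)
    (x : V) : HasSum (fun n => t ^ n / n ! * ℓ ((H ^ n) x)) (ℓ (NormedSpace.exp (t • H) x)) := by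
  have h := (NormedSpace.exp_series_hasSum_exp' (𝕂 := ℝ) (t • H)).mapL
    (ℓ.comp (ContinuousLinearMap.apply ℝ V x))
  refine h.congr_fun fun n => ?_
  rw [ContinuousLinearMap.comp_apply, ContinuousLinearMap.apply_apply, smul_pow, smul_smul,
    smul_apply, map_smul, smul_eq_mul, div_eq_inv_mul]

lemma apply_exp_smul_apply_eq [FiniteDimensional ℝ V] (Q : V →ₗ[ℝ] V →ₗ[ℝ] ℝ) (H : V →L[ℝ] V)
    (hsa : ∀ x y, Q x (H y) = Q (H x) y) (t : ℝ) (x : V) :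
    Q x (NormedSpace.exp (t • H) x) =
      Q x x + t * Q x (H x) + ∑' n, t ^ (n + 2) / (n + 2)! * Q (H x) ((H ^ n) (H x)) := by
  have hshift : ∀ n, Q x ((H ^ (n + 2)) x) = Q (H x) ((H ^ n) (H x)) := fun n => by
    rw [pow_succ, pow_succ', mul_apply_eq_comp, mul_apply_eq_comp, hsa]
  have h := hasSum_apply_exp_smul_apply (LinearMap.toContinuousLinearMap (Q x)) H t x
  rw [← hasSum_nat_add_iff' 2] at h
  simp only [LinearMap.coe_toContinuousLinearMap', hshift] at h
  rw [h.tsum_eq]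
  simp [Finset.sum_range_succ]

end ExpSeries

/-- Convexity estimate: for a positive definite quadratic form `Q`, a
`Q`-selfadjoint operator `H` with `‖H‖_Q ≤ 1` and `0 < t ≤ 1`,
`Q(x) + t·Q(x,Hx) ≤ Q(x, exp(tH)x) ≤ Q(x) + t·Q(x,Hx) + t²·Q(Hx)`,
with equality (in either inequality) iff `Hx = 0`. -/
theorem estimation_neighborhood
    {V : Type*} [NormedAddCommGroup V] [NormedSpace ℝ V] [FiniteDimensional ℝ V]
    (Q : V →ₗ[ℝ] V →ₗ[ℝ] ℝ)
    (hsymm : ∀ x y, Q x y = Q y x) (hpos : ∀ x : V, x ≠ 0 → 0 < Q x x)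
    (H : V →L[ℝ] V)
    (hsa : ∀ x y, Q x (H y) = Q (H x) y)
    (hnorm : ∀ x, Q (H x) (H x) ≤ Q x x)
    (t : ℝ) (ht0 : 0 < t) (ht1 : t ≤ 1) (x : V) :
    (Q x x + t * Q x (H x) ≤ Q x (NormedSpace.exp (t • H) x) ∧
      Q x (NormedSpace.exp (t • H) x) ≤ Q x x + t * Q x (H x) + t ^ 2 * Q (H x) (H x)) ∧
    (Q x (NormedSpace.exp (t • H) x) = Q x x + t * Q x (H x) ↔ H x = 0) ∧
    (Q x (NormedSpace.exp (t • H) x) =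
        Q x x + t * Q x (H x) + t ^ 2 * Q (H x) (H x) ↔ H x = 0) := by
  rw [apply_exp_smul_apply_eq Q H hsa t x]
  rcases eq_or_ne (H x) 0 with hHx | hHx
  · simp [hHx]
  have hbound (n : ℕ) := Q.abs_apply_pow_le H hsymm hpos hnorm n (H x)
  have hQHx : 0 < Q (H x) ((H ^ 0) (H x)) := hpos _ hHx
  have hR_pos := tsum_pow_add_two_div_factorial_mul_pos ht0 ht1 hQHx hbound
    (Q.abs_apply_pow_odd_le H hsymm hpos hsa hnorm · (H x))
  have hR_lt := tsum_pow_add_two_div_factorial_mul_lt ht0 ht1 hQHx hbound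
  rw [pow_zero, one_apply_eq_self] at hR_lt hQHx
  refine ⟨⟨by linarith, by linarith⟩, ⟨fun h => by linarith, fun h => absurd h hHx⟩,
    ⟨fun h => by linarith, fun h => absurd h hHx⟩⟩
end

section
/- Let Q be a positive definite quadratic form on V, let Z ⊆ V be a closed discrete set with γ = min_{z∈Z} Q(z) attained, let Q_min = {z ∈ Z : Q(z) = γ}, and let δ = min_{z ∈ Z∖Q_min} Q(z) − γ > 0. Then there is ε > 0 such that for every Q-selfadjoint H with ‖H‖_Q < ε and every x ∈ Q_min, z ∈ Z∖Q_min, one has Q(x, exp(H)x) < Q(z, exp(H)z). In particular the minimal vectors of the perturbed form Q_H(x) = Q(x, exp(H)x) restricted to Z are contained in Q_min. -/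
/-! Expanding `exp H` as a power series, Cauchy–Schwarz and `Q(Hy) ≤ η² Q(y)` give
`|Q(x, Hⁿx)| ≤ ηⁿ Q(x)`, hence `|Q_H(x) - Q(x)| ≤ (exp η - 1) Q(x)`. For `t = exp η - 1` the
minimal vectors then satisfy `Q_H ≤ (1 + t) γ`, the others `Q_H ≥ (1 - t)(γ + δ)`, and these
bounds separate as soon as `t (2γ + δ) < δ`. -/

open NormedSpace
open scoped Nat

theorem abs_map_exp_sub_map_one_le {A : Type*} [NormedRing A] [NormedAlgebra ℝ A]
    [CompleteSpace A] (ℓ : A →L[ℝ] ℝ) (a : A) {r C : ℝ} (h : ∀ n, |ℓ (a ^ n)| ≤ r ^ n * C) :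
    |ℓ (exp a) - ℓ 1| ≤ (Real.exp r - 1) * C := by
  have hℓ : HasSum (fun n ↦ (n !⁻¹ : ℝ) * ℓ (a ^ n)) (ℓ (exp a)) := by
    simpa using (exp_series_hasSum_exp' (𝕂 := ℝ) a).mapL ℓ
  have hexp : HasSum (fun n ↦ (n !⁻¹ : ℝ) * (r ^ n * C)) (Real.exp r * C) := by
    simpa [Real.exp_eq_exp_ℝ, mul_assoc] using (exp_series_hasSum_exp' (𝕂 := ℝ) r).mul_right C
  have hℓ₁ := (hasSum_nat_add_iff' 1).mpr hℓ
  have hexp₁ := (hasSum_nat_add_iff' 1).mpr hexp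
  simp only [Finset.sum_range_one, Nat.factorial_zero, Nat.cast_one, inv_one, one_mul, pow_zero]
    at hℓ₁ hexp₁
  rw [sub_one_mul]
  refine hℓ₁.norm_le_of_bounded hexp₁ fun n ↦ ?_
  rw [Real.norm_eq_abs, abs_mul, abs_of_nonneg (by positivity)]
  exact mul_le_mul_of_nonneg_left (h _) (by positivity)

namespace LinearMap.BilinForm

section

variable {V : Type*} [AddCommGroup V] [Module ℝ V] {Q : LinearMap.BilinForm ℝ V} {f : V → V}

theorem apply_iterate_apply_iterate_le {c : ℝ} (hc : 0 ≤ c) (hf : ∀ x, Q (f x) (f x) ≤ c * Q x x)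
    (n : ℕ) (x : V) : Q (f^[n] x) (f^[n] x) ≤ c ^ n * Q x x := by
  induction n with
  | zero => simp
  | succ n ih =>
    rw [Function.iterate_succ_apply', pow_succ', mul_assoc]
    exact (hf _).trans (mul_le_mul_of_nonneg_left ih hc)

theorem abs_apply_iterate_le (hQ : ∀ x, 0 ≤ Q x x) (hsymm : LinearMap.IsSymm Q) {η : ℝ} (hη : 0 ≤ η)
    (hf : ∀ x, Q (f x) (f x) ≤ η ^ 2 * Q x x) (n : ℕ) (x : V) :
    |Q x (f^[n] x)| ≤ η ^ n * Q x x := by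
  refine abs_le_of_sq_le_sq ?_ (mul_nonneg (pow_nonneg hη n) (hQ x))
  calc Q x (f^[n] x) ^ 2 ≤ Q x x * Q (f^[n] x) (f^[n] x) := Q.apply_sq_le_of_symm hQ hsymm _ _
    _ ≤ Q x x * ((η ^ 2) ^ n * Q x x) :=
      mul_le_mul_of_nonneg_left (apply_iterate_apply_iterate_le (sq_nonneg η) hf n x) (hQ x)
    _ = (η ^ n * Q x x) ^ 2 := by ring

end

theorem abs_apply_exp_apply_sub_le {V : Type*} [NormedAddCommGroup V] [NormedSpace ℝ V]
    [FiniteDimensional ℝ V] {Q : LinearMap.BilinForm ℝ V} (hQ : ∀ x, 0 ≤ Q x x)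
    (hsymm : LinearMap.IsSymm Q) {H : V →L[ℝ] V} {η : ℝ} (hη : 0 ≤ η)
    (hH : ∀ x, Q (H x) (H x) ≤ η ^ 2 * Q x x) (x : V) :
    |Q x (exp H x) - Q x x| ≤ (Real.exp η - 1) * Q x x := by
  let ℓ := (Q x).toContinuousLinearMap ∘L ContinuousLinearMap.apply ℝ V x
  have hℓ : ∀ T : V →L[ℝ] V, ℓ T = Q x (T x) := fun T ↦ rfl
  simpa [hℓ] using abs_map_exp_sub_map_one_le ℓ H fun n ↦ by
    simpa [hℓ, FunLike.coe_pow_eq_iterate] using abs_apply_iterate_le hQ hsymm hη hH n x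

end LinearMap.BilinForm

theorem minimal_vectors_in_neighborhood_general
    {V : Type*} [NormedAddCommGroup V] [NormedSpace ℝ V] [FiniteDimensional ℝ V]
    (Q : V →ₗ[ℝ] V →ₗ[ℝ] ℝ)
    (hsymm : ∀ x y, Q x y = Q y x) (hpos : ∀ x : V, x ≠ 0 → 0 < Q x x)
    (Z : Set V) (γ δ : ℝ) (hγpos : 0 < γ) (hδpos : 0 < δ)
    (hatt : ∃ z ∈ Z, Q z z = γ)
    (hδ : ∀ z ∈ Z, Q z z ≠ γ → γ + δ ≤ Q z z) :
    ∃ ε > (0 : ℝ), ∀ H : V →L[ℝ] V, (∀ x y, Q x (H y) = Q (H x) y) →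
      ∀ η : ℝ, 0 ≤ η → η < ε → (∀ x, Q (H x) (H x) ≤ η ^ 2 * Q x x) →
      (∀ x ∈ Z, Q x x = γ → ∀ z ∈ Z, Q z z ≠ γ →
        Q x (NormedSpace.exp H x) < Q z (NormedSpace.exp H z)) ∧
      (∀ z ∈ Z, (∀ w ∈ Z, Q z (NormedSpace.exp H z) ≤ Q w (NormedSpace.exp H w)) →
        Q z z = γ) := by
  have hQ : ∀ x, 0 ≤ Q x x := fun x ↦ by
    rcases eq_or_ne x 0 with rfl | hx
    exacts [by simp, (hpos x hx).le]
  have hQsymm : LinearMap.IsSymm Q := ⟨hsymm⟩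
  have hs : 0 < δ / (2 * γ + δ) := by positivity
  refine ⟨Real.log (1 + δ / (2 * γ + δ)), Real.log_pos (by linarith), fun H _ η hη hηε hH ↦ ?_⟩
  have ht : (Real.exp η - 1) * (2 * γ + δ) < δ := by
    rw [← lt_div_iff₀ (by positivity)]
    have := Real.exp_lt_exp.mpr hηε
    rw [Real.exp_log (by positivity)] at this
    linarith
  have separation : ∀ x ∈ Z, Q x x = γ → ∀ z ∈ Z, Q z z ≠ γ →
      Q x (exp H x) < Q z (exp H z) := by
    intro x _ hx z hz hzγ
    have hxH := abs_le.mp (LinearMap.BilinForm.abs_apply_exp_apply_sub_le hQ hQsymm hη hH x)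
    have hzH := abs_le.mp (LinearMap.BilinForm.abs_apply_exp_apply_sub_le hQ hQsymm hη hH z)
    have hzδ := hδ z hz hzγ
    have hexp := Real.one_le_exp hη
    rw [hx] at hxH
    nlinarith
  refine ⟨separation, fun z hz hmin ↦ by_contra fun hzγ ↦ ?_⟩
  obtain ⟨x, hx, hxγ⟩ := hatt
  exact (hmin x hx).not_gt (separation x hx hxγ z hz hzγ)

/-- Minimal vectors in a neighbourhood: there is `ε > 0` such that for every
`Q`-selfadjoint `H` with `‖H‖_Q < ε`, every minimal vector `x` of `Q` on `Z` and
every non-minimal `z ∈ Z`, one has `Q_H(x) < Q_H(z)` where `Q_H(y) = Q(y, exp(H)y)`.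
In particular the minimal vectors of `Q_H` on `Z` lie among those of `Q`. -/
theorem minimal_vectors_in_neighborhood
    {V : Type*} [NormedAddCommGroup V] [NormedSpace ℝ V] [FiniteDimensional ℝ V]
    (Q : V →ₗ[ℝ] V →ₗ[ℝ] ℝ)
    (hsymm : ∀ x y, Q x y = Q y x) (hpos : ∀ x : V, x ≠ 0 → 0 < Q x x)
    (Z : Set V) (γ δ : ℝ) (hγpos : 0 < γ) (hδpos : 0 < δ)
    (hγ : ∀ z ∈ Z, γ ≤ Q z z) (hatt : ∃ z ∈ Z, Q z z = γ)
    (hδ : ∀ z ∈ Z, Q z z ≠ γ → γ + δ ≤ Q z z) :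
    ∃ ε > (0 : ℝ), ∀ H : V →L[ℝ] V, (∀ x y, Q x (H y) = Q (H x) y) →
      ∀ η : ℝ, 0 ≤ η → η < ε → (∀ x, Q (H x) (H x) ≤ η ^ 2 * Q x x) →
      (∀ x ∈ Z, Q x x = γ → ∀ z ∈ Z, Q z z ≠ γ →
        Q x (NormedSpace.exp H x) < Q z (NormedSpace.exp H z)) ∧
      (∀ z ∈ Z, (∀ w ∈ Z, Q z (NormedSpace.exp H z) ≤ Q w (NormedSpace.exp H w)) →
        Q z z = γ) :=
  minimal_vectors_in_neighborhood_general Q hsymm hpos Z γ δ hγpos hδpos hatt hδ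
end

section
/- Let Q be a positive definite quadratic form on V, X ⊆ V∖{0} a nonempty finite set, and 𝔭 a linear subspace of Q-selfadjoint endomorphisms. Then (Q, X) is perfect and eutactic with respect to 𝔭 if and only if for every H ∈ 𝔭, either H = 0 or there exists x ∈ X with Q(x, Hx) < 0. -/
/-- `(Q, X)` is perfect and eutactic (w.r.t. a space `𝔭` of `Q`-selfadjoint
endomorphisms with `𝔭 ∩ ℝ·id = 0`) iff for every `H ∈ 𝔭`, either `H = 0` or
there is `x ∈ X` with `Q(x, Hx) < 0`. -/
theorem perfect_and_eutactic_iff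
    {V : Type*} [AddCommGroup V] [Module ℝ V]
    (Q : V →ₗ[ℝ] V →ₗ[ℝ] ℝ)
    (hsymm : ∀ x y, Q x y = Q y x) (hpos : ∀ x : V, x ≠ 0 → 0 < Q x x)
    (X : Finset V) (hXne : X.Nonempty) (hX0 : (0 : V) ∉ X)
    (𝔭 : Submodule ℝ (Module.End ℝ V))
    (hsa : ∀ H ∈ 𝔭, ∀ x y, Q x (H y) = Q (H x) y)
    (hid : ∀ c : ℝ, c • (1 : Module.End ℝ V) ∈ 𝔭 → c = 0) :
    ((∀ H ∈ 𝔭, ∀ c : ℝ, (∀ x ∈ X, Q x (H x) = c * Q x x) →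
        H = c • (1 : Module.End ℝ V)) ∧
      (∀ H ∈ 𝔭, (∃ x ∈ X, 0 < Q x (H x)) → ∃ y ∈ X, Q y (H y) < 0)) ↔
    (∀ H ∈ 𝔭, H = 0 ∨ ∃ x ∈ X, Q x (H x) < 0) := by
  constructor
  · rintro ⟨hperf, heut⟩ H hH
    by_cases hlt : ∃ x ∈ X, Q x (H x) < 0
    · exact Or.inr hlt
    · left
      push_neg at hlt
      have hzero : ∀ x ∈ X, Q x (H x) = 0 * Q x x := by
        intro x hx
        rw [zero_mul]
        by_contra hne
        have hpos' : 0 < Q x (H x) := lt_of_le_of_ne (hlt x hx) (Ne.symm hne)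
        obtain ⟨y, hy, hylt⟩ := heut H hH ⟨x, hx, hpos'⟩
        exact absurd (hlt y hy) (not_le.mpr hylt)
      have := hperf H hH 0 hzero
      simpa using this
  · intro h
    constructor
    · intro H hH c hc
      rcases h H hH with h0 | ⟨x, hx, hxlt⟩
      · have hc0 : c = 0 := by
          obtain ⟨x, hx⟩ := hXne
          have hq := hpos x (by rintro rfl; exact hX0 hx)
          have h1 := hc x hx
          rw [h0] at h1
          simp only [LinearMap.zero_apply, map_zero] at h1
          nlinarith
        subst hc0; simpa using h0
      · exfalso
        have hq := hpos x (by rintro rfl; exact hX0 hx)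
        have hcneg : c < 0 := by nlinarith [hc x hx]
        rcases h (-H) (neg_mem hH) with h0 | ⟨y, hy, hylt⟩
        · have hH0 : H = 0 := neg_eq_zero.mp h0
          rw [hH0] at hxlt; simp at hxlt
        · have hy' : 0 < Q y (H y) := by
            have : Q y (-(H y)) < 0 := by simpa using hylt
            simp only [map_neg] at this; linarith
          have hqy := hpos y (by rintro rfl; exact hX0 hy)
          nlinarith [hc y hy]
    · rintro H hH ⟨x, hx, hxpos⟩
      rcases h H hH with h0 | hlt
      · rw [h0] at hxpos; simp at hxpos
      · exact hlt
end

section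
/- Let Q be a positive definite quadratic form on V, X ⊆ V∖{0} a nonempty finite set, and 𝔭 a subspace of Q-selfadjoint endomorphisms. Then (Q, X) is weakly perfect and eutactic with respect to 𝔭 if and only if for every H ∈ 𝔭, either Hx = 0 for all x ∈ X, or there exists x ∈ X with Q(x, Hx) < 0. -/
/-- `(Q, X)` is weakly perfect and eutactic (w.r.t. a space `𝔭` of
`Q`-selfadjoint endomorphisms with `𝔭 ∩ ℝ·id = 0`) iff for every `H ∈ 𝔭`,
either `Hx = 0` for all `x ∈ X`, or there is `x ∈ X` with `Q(x, Hx) < 0`. -/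
theorem weakly_perfect_and_eutactic_iff
    {V : Type*} [AddCommGroup V] [Module ℝ V]
    (Q : V →ₗ[ℝ] V →ₗ[ℝ] ℝ)
    (hsymm : ∀ x y, Q x y = Q y x) (hpos : ∀ x : V, x ≠ 0 → 0 < Q x x)
    (X : Finset V) (hXne : X.Nonempty) (hX0 : (0 : V) ∉ X)
    (𝔭 : Submodule ℝ (Module.End ℝ V))
    (hsa : ∀ H ∈ 𝔭, ∀ x y, Q x (H y) = Q (H x) y)
    (hid : ∀ c : ℝ, c • (1 : Module.End ℝ V) ∈ 𝔭 → c = 0) :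
    ((∀ H ∈ 𝔭, ∀ c : ℝ, (∀ x ∈ X, Q x (H x) = c * Q x x) →
        ∀ x ∈ X, H x = c • x) ∧
      (∀ H ∈ 𝔭, (∃ x ∈ X, 0 < Q x (H x)) → ∃ y ∈ X, Q y (H y) < 0)) ↔
    (∀ H ∈ 𝔭, (∀ x ∈ X, H x = 0) ∨ ∃ x ∈ X, Q x (H x) < 0) := by
  constructor
  · rintro ⟨hwp, heu⟩ H hH
    by_cases hneg : ∃ x ∈ X, Q x (H x) < 0
    · exact Or.inr hneg
    · push_neg at hneg
      left
      have hzero : ∀ x ∈ X, Q x (H x) = 0 := by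
        intro x hx
        rcases lt_or_eq_of_le (hneg x hx) with h | h
        · rcases heu H hH ⟨x, hx, h⟩ with ⟨y, hy, hy'⟩
          exact absurd hy' (not_lt.2 (hneg y hy))
        · exact h.symm
      intro x hx
      have := hwp H hH 0 (by intro x hx; simp [hzero x hx]) x hx
      simpa using this
  · intro hrhs
    constructor
    · intro H hH c hc x hx
      have hxne : x ≠ 0 := fun h => hX0 (h ▸ hx)
      rcases hrhs H hH with hz | ⟨y, hy, hy'⟩
      · have : c * Q x x = 0 := by rw [← hc x hx, hz x hx, map_zero]
        have hc0 : c = 0 := by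
          rcases mul_eq_zero.1 this with h | h
          · exact h
          · exact absurd h (ne_of_gt (hpos x hxne))
        rw [hz x hx, hc0, zero_smul]
      · have hyne : y ≠ 0 := fun h => hX0 (h ▸ hy)
        have hclt : c < 0 := by
          have := hc y hy ▸ hy'
          nlinarith [hpos y hyne]
        rcases hrhs (-H) (neg_mem hH) with hz | ⟨z, hz, hz'⟩
        · exfalso
          have : H y = 0 := by
            have := hz y hy
            simpa [neg_eq_zero] using this
          rw [this, map_zero] at hy'
          exact lt_irrefl 0 hy'
        · exfalso
          have hzne : z ≠ 0 := fun h => hX0 (h ▸ hz)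
          have : Q z ((-H) z) = -(c * Q z z) := by
            simp [hc z hz]
          rw [this] at hz'
          nlinarith [hpos z hzne]
    · intro H hH ⟨x, hx, hx'⟩
      rcases hrhs H hH with hz | h
      · rw [hz x hx, map_zero] at hx'
        exact absurd hx' (lt_irrefl 0)
      · exact h
end

section
/- Suppose (Q, X) is perfect and eutactic, where X is a nonempty finite subset of the minimal vectors of Q on Z, and 𝔭 ≠ {0} is a finite-dimensional subspace of Q-selfadjoint endomorphisms. Then there exists δ > 0 such that for every H ∈ 𝔭 ∖ {0}, min_{x ∈ X} Q(x, Hx) < −δ·‖H‖_Q. -/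
/-- The `Q`-operator norm `‖H‖_Q = (sup_{x ≠ 0} Q(Hx)/Q(x))^{1/2}`. -/
noncomputable def qNorm {V : Type*} [AddCommGroup V] [Module ℝ V]
    (Q : V →ₗ[ℝ] V →ₗ[ℝ] ℝ) (H : Module.End ℝ V) : ℝ :=
  Real.sqrt (⨆ x : {x : V // x ≠ 0}, Q (H x.1) (H x.1) / Q x.1 x.1)

/-!
If `min_{x ∈ X} Q(x, Hx) ≥ 0` for some nonzero `H ∈ 𝔭`, eutaxy forces `Q(x, Hx) = 0` on all of `X`,
and perfection then gives `H = 0 • 1`; so the minimum is negative off the origin. Taking `Q` as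
the inner product, the maps `H ↦ Q(x, Hx)` are finitely many linear functionals on the
finite-dimensional space `𝔭`, so by compactness of its unit sphere and homogeneity the minimum is
below `-δ ‖H‖` for the operator norm, which dominates `‖H‖_Q`.
-/

theorem IsCompact.exists_pos_forall_exists_lt_neg {X ι : Type*} [TopologicalSpace X]
    {K : Set X} (hK : IsCompact K) (s : Finset ι) (f : ι → X → ℝ)
    (hf : ∀ i ∈ s, ContinuousOn (f i) K) (hneg : ∀ v ∈ K, ∃ i ∈ s, f i v < 0) :
    ∃ m > (0 : ℝ), ∀ v ∈ K, ∃ i ∈ s, f i v < -m := by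
  rcases K.eq_empty_or_nonempty with rfl | ⟨v₀, hv₀⟩
  · exact ⟨1, one_pos, by simp⟩
  obtain ⟨i₀, hi₀, -⟩ := hneg v₀ hv₀
  have hs : s.Nonempty := ⟨i₀, hi₀⟩
  let g : X → ℝ := fun v => s.inf' hs fun i => f i v
  obtain ⟨v₁, hv₁, hmax⟩ := hK.exists_isMaxOn ⟨v₀, hv₀⟩ (ContinuousOn.finset_inf'_apply hs hf)
  have hg₁ : g v₁ < 0 := by
    obtain ⟨i, hi, hlt⟩ := hneg v₁ hv₁
    exact (Finset.inf'_le _ hi).trans_lt hlt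
  refine ⟨-g v₁ / 2, by linarith, fun v hv => ?_⟩
  obtain ⟨i, hi, hgi⟩ : ∃ i ∈ s, g v = f i v := s.exists_mem_eq_inf' hs _
  have hgv : g v ≤ g v₁ := hmax hv
  exact ⟨i, hi, by linarith⟩

theorem exists_pos_forall_exists_lt_neg_mul_norm {E ι : Type*} [NormedAddCommGroup E]
    [NormedSpace ℝ E] [FiniteDimensional ℝ E] (s : Finset ι) (ℓ : ι → E →L[ℝ] ℝ)
    (hneg : ∀ v : E, v ≠ 0 → ∃ i ∈ s, ℓ i v < 0) :
    ∃ δ > (0 : ℝ), ∀ v : E, v ≠ 0 → ∃ i ∈ s, ℓ i v < -δ * ‖v‖ := by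
  obtain ⟨δ, hδ, hunif⟩ := (isCompact_sphere (0 : E) 1).exists_pos_forall_exists_lt_neg s
    (fun i v => ℓ i v) (fun i _ => (ℓ i).continuous.continuousOn)
    (fun v hv => hneg v (ne_zero_of_mem_unit_sphere ⟨v, hv⟩))
  refine ⟨δ, hδ, fun v hv0 => ?_⟩
  have hnorm : 0 < ‖v‖ := norm_pos_iff.2 hv0
  obtain ⟨i, hi, hlt⟩ := hunif (‖v‖⁻¹ • v) (by simp [norm_smul, hnorm.ne'])
  refine ⟨i, hi, ?_⟩
  calc ℓ i v = ‖v‖ * ℓ i (‖v‖⁻¹ • v) := by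
        rw [map_smul, smul_eq_mul, mul_inv_cancel_left₀ hnorm.ne']
    _ < ‖v‖ * -δ := mul_lt_mul_of_pos_left hlt hnorm
    _ = -δ * ‖v‖ := mul_comm _ _

theorem qNorm_le_opNorm {V : Type*} [NormedAddCommGroup V] [InnerProductSpace ℝ V]
    (Q : V →ₗ[ℝ] V →ₗ[ℝ] ℝ) (hQ : ∀ x y, Q x y = inner ℝ x y) (T : V →L[ℝ] V) :
    qNorm Q T ≤ ‖T‖ := by
  have hQnorm (x : V) : Q x x = ‖x‖ ^ 2 := by rw [hQ, real_inner_self_eq_norm_sq]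
  have hratio (x : {x : V // x ≠ 0}) : Q (T x.1) (T x.1) / Q x.1 x.1 ≤ ‖T‖ ^ 2 := by
    rw [hQnorm, hQnorm, div_le_iff₀ (pow_pos (norm_pos_iff.2 x.2) 2), ← mul_pow]
    gcongr
    exact T.le_opNorm x
  calc qNorm Q T ≤ Real.sqrt (‖T‖ ^ 2) := Real.sqrt_le_sqrt (Real.iSup_le hratio (by positivity))
    _ = ‖T‖ := Real.sqrt_sq (norm_nonneg T)

theorem exists_pos_forall_exists_lt_neg_mul_qNorm {V : Type*} [NormedAddCommGroup V]
    [InnerProductSpace ℝ V] [FiniteDimensional ℝ V]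
    (Q : V →ₗ[ℝ] V →ₗ[ℝ] ℝ) (hQ : ∀ x y, Q x y = inner ℝ x y) (X : Finset V)
    (𝔭 : Submodule ℝ (Module.End ℝ V)) (hneg : ∀ H ∈ 𝔭, H ≠ 0 → ∃ x ∈ X, Q x (H x) < 0) :
    ∃ δ > (0 : ℝ), ∀ H ∈ 𝔭, H ≠ 0 → ∃ x ∈ X, Q x (H x) < -δ * qNorm Q H := by
  let e : Module.End ℝ V ≃ₗ[ℝ] (V →L[ℝ] V) := LinearMap.toContinuousLinearMap
  let 𝔮 := 𝔭.map e.toLinearMap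
  obtain ⟨δ, hδ, hunif⟩ := exists_pos_forall_exists_lt_neg_mul_norm (E := 𝔮) X
    (fun x => (innerSL ℝ x).comp ((ContinuousLinearMap.apply ℝ V x).comp 𝔮.subtypeL)) <| by
      rintro ⟨_, H, hH, rfl⟩ hH0
      simpa [e, hQ] using hneg H hH (by simpa [e] using hH0)
  refine ⟨δ, hδ, fun H hH hH0 => ?_⟩
  obtain ⟨x, hx, hlt⟩ := hunif ⟨e H, H, hH, rfl⟩ fun h => hH0 (e.map_eq_zero_iff.1 congr($h.1))
  refine ⟨x, hx, ?_⟩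
  calc Q x (H x) < -δ * ‖e H‖ := by simpa [e, hQ] using hlt
    _ ≤ -δ * qNorm Q H := by
      simpa [e] using mul_le_mul_of_nonneg_left (qNorm_le_opNorm Q hQ (e H)) hδ.le

theorem exists_neg_of_perfect_of_eutactic {V : Type*} [AddCommGroup V] [Module ℝ V]
    (Q : V →ₗ[ℝ] V →ₗ[ℝ] ℝ) (X : Finset V) (𝔭 : Submodule ℝ (Module.End ℝ V))
    (hperfect : ∀ H ∈ 𝔭, ∀ c : ℝ, (∀ x ∈ X, Q x (H x) = c * Q x x) →
        H = c • (1 : Module.End ℝ V))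
    (heutactic : ∀ H ∈ 𝔭, (∃ x ∈ X, 0 < Q x (H x)) → ∃ y ∈ X, Q y (H y) < 0)
    {H : Module.End ℝ V} (hH : H ∈ 𝔭) (hH0 : H ≠ 0) :
    ∃ x ∈ X, Q x (H x) < 0 := by
  by_contra! hnonneg
  by_cases hpos : ∃ x ∈ X, 0 < Q x (H x)
  · obtain ⟨y, hy, hneg⟩ := heutactic H hH hpos
    exact (hnonneg y hy).not_gt hneg
  push Not at hpos
  have hzero := hperfect H hH 0 fun x hx => by
    rw [zero_mul]
    exact le_antisymm (hpos x hx) (hnonneg x hx)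
  exact hH0 (by simpa using hzero)

@[reducible] def innerProductSpaceCoreOfPosDef {V : Type*} [AddCommGroup V] [Module ℝ V]
    (Q : V →ₗ[ℝ] V →ₗ[ℝ] ℝ) (hsymm : ∀ x y, Q x y = Q y x)
    (hpos : ∀ x : V, x ≠ 0 → 0 < Q x x) : InnerProductSpace.Core ℝ V where
  inner x y := Q x y
  conj_inner_symm x y := by simpa using hsymm y x
  re_inner_nonneg x := by
    rcases eq_or_ne x 0 with rfl | hx
    · simp
    · simpa using (hpos x hx).le
  add_left x y z := by simp
  smul_left x y r := by simp
  definite x hx := by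
    by_contra h
    exact (hpos x h).ne' (by simpa using hx)

theorem uniform_negativity_of_perfect_eutactic_general
    {V : Type*} [AddCommGroup V] [Module ℝ V] [FiniteDimensional ℝ V]
    (Q : V →ₗ[ℝ] V →ₗ[ℝ] ℝ)
    (hsymm : ∀ x y, Q x y = Q y x) (hpos : ∀ x : V, x ≠ 0 → 0 < Q x x)
    (X : Finset V)
    (𝔭 : Submodule ℝ (Module.End ℝ V))
    (hperfect : ∀ H ∈ 𝔭, ∀ c : ℝ, (∀ x ∈ X, Q x (H x) = c * Q x x) →
        H = c • (1 : Module.End ℝ V))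
    (heutactic : ∀ H ∈ 𝔭, (∃ x ∈ X, 0 < Q x (H x)) → ∃ y ∈ X, Q y (H y) < 0) :
    ∃ δ > (0 : ℝ), ∀ H ∈ 𝔭, H ≠ 0 → ∃ x ∈ X, Q x (H x) < -δ * qNorm Q H := by
  let core := innerProductSpaceCoreOfPosDef Q hsymm hpos
  let _ : NormedAddCommGroup V := core.toNormedAddCommGroup
  let _ : InnerProductSpace ℝ V := InnerProductSpace.ofCore core.toCore
  exact exists_pos_forall_exists_lt_neg_mul_qNorm Q (fun _ _ => rfl) X 𝔭 fun _ hH hH0 =>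
    exists_neg_of_perfect_of_eutactic Q X 𝔭 hperfect heutactic hH hH0

/-- If `(Q, X)` is perfect and eutactic (`X` a nonempty finite subset of the
minimal vectors of `Q` on `Z`, `𝔭 ≠ 0` a subspace of `Q`-selfadjoint
endomorphisms), then there is `δ > 0` with
`min_{x∈X} Q(x,Hx) < −δ·‖H‖_Q` for all nonzero `H ∈ 𝔭`. -/
theorem uniform_negativity_of_perfect_eutactic
    {V : Type*} [AddCommGroup V] [Module ℝ V] [FiniteDimensional ℝ V] [Nontrivial V]
    (Q : V →ₗ[ℝ] V →ₗ[ℝ] ℝ)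
    (hsymm : ∀ x y, Q x y = Q y x) (hpos : ∀ x : V, x ≠ 0 → 0 < Q x x)
    (Z : Set V) (hZ0 : (0 : V) ∉ Z)
    (X : Finset V) (hXne : X.Nonempty) (hXZ : ↑X ⊆ Z)
    (hXmin : ∀ x ∈ X, ∀ z ∈ Z, Q x x ≤ Q z z)
    (𝔭 : Submodule ℝ (Module.End ℝ V)) (h𝔭 : 𝔭 ≠ ⊥)
    (hsa : ∀ H ∈ 𝔭, ∀ x y, Q x (H y) = Q (H x) y)
    (hperfect : ∀ H ∈ 𝔭, ∀ c : ℝ, (∀ x ∈ X, Q x (H x) = c * Q x x) →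
        H = c • (1 : Module.End ℝ V))
    (heutactic : ∀ H ∈ 𝔭, (∃ x ∈ X, 0 < Q x (H x)) → ∃ y ∈ X, Q y (H y) < 0) :
    ∃ δ > (0 : ℝ), ∀ H ∈ 𝔭, H ≠ 0 → ∃ x ∈ X, Q x (H x) < -δ * qNorm Q H :=
  uniform_negativity_of_perfect_eutactic_general Q hsymm hpos X 𝔭 hperfect heutactic
end

section
/- Let G be a group of invertible linear maps on ℝⁿ with Lie algebra 𝔤 acting irreducibly on ℝⁿ (more generally, suppose the orbit of some element of Z under the identity component G⁰ spans V). If (Q, X) is weakly perfect for a nonempty finite X ⊆ Z, then (Q, X) is perfect. Equivalently: if (Q, X) is weakly perfect but not perfect, then X is contained in a proper G⁰-invariant subspace U of V; U is constructed as U = ⋂_{H ∈ 𝒜} ker H, where 𝒜 = {H ∈ 𝔭_Q ⊕ ℝ·id : Hx = 0 ∀x ∈ X}, and U is invariant under both 𝔨_Q and 𝔭_Q. -/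
/-- Bracket of an element of `g` with an element of `g ⊔ ℝ·1` lies in `g`. -/
lemma aux_bracket_mem_voronoi {V : Type*} [AddCommGroup V] [Module ℝ V]
    (g : Submodule ℝ (Module.End ℝ V))
    (hbr : ∀ A ∈ g, ∀ B ∈ g, A * B - B * A ∈ g)
    {A H : Module.End ℝ V} (hA : A ∈ g)
    (hH : H ∈ g ⊔ Submodule.span ℝ {(1 : Module.End ℝ V)}) :
    A * H - H * A ∈ g := by
  obtain ⟨H₀, h0, z, hz, rfl⟩ := Submodule.mem_sup.mp hH
  obtain ⟨t, rfl⟩ := Submodule.mem_span_singleton.mp hz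
  have h : A * (H₀ + t • 1) - (H₀ + t • 1) * A = A * H₀ - H₀ * A := by
    simp only [mul_add, add_mul, mul_smul_comm, smul_mul_assoc, mul_one, one_mul]
    abel
  rw [h]
  exact hbr A hA H₀ h0

/-- If `(Q, X)` is weakly perfect but not perfect (w.r.t. the `Q`-selfadjoint
elements of a Lie algebra `g ⊆ gl(V)` closed under Lie bracket and `Q`-adjoint),
then `X` is contained in a proper subspace `U` of `V` invariant under `g`
(hence under the identity component `G⁰`).  Equivalently, if the Lie algebra
acts irreducibly, weak perfection implies perfection. -/
theorem weakly_perfect_not_perfect_invariant_subspace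
    {V : Type*} [AddCommGroup V] [Module ℝ V] [FiniteDimensional ℝ V]
    (Q : V →ₗ[ℝ] V →ₗ[ℝ] ℝ)
    (hsymm : ∀ x y, Q x y = Q y x) (hpos : ∀ x : V, x ≠ 0 → 0 < Q x x)
    (g : Submodule ℝ (Module.End ℝ V))
    (hbr : ∀ A ∈ g, ∀ B ∈ g, A * B - B * A ∈ g)
    (hadj : ∀ A ∈ g, ∃ A' ∈ g, ∀ x y, Q x (A y) = Q (A' x) y)
    (X : Finset V) (hXne : X.Nonempty) (hX0 : (0 : V) ∉ X)
    (hwp : ∀ H ∈ g, (∀ x y, Q x (H y) = Q (H x) y) →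
        ∀ c : ℝ, (∀ x ∈ X, Q x (H x) = c * Q x x) → ∀ x ∈ X, H x = c • x)
    (hnp : ¬ ∀ H ∈ g, (∀ x y, Q x (H y) = Q (H x) y) →
        ∀ c : ℝ, (∀ x ∈ X, Q x (H x) = c * Q x x) →
          H = c • (1 : Module.End ℝ V)) :
    ∃ U : Submodule ℝ V, U ≠ ⊤ ∧ (∀ x ∈ X, x ∈ U) ∧
      ∀ A ∈ g, ∀ u ∈ U, A u ∈ U := by
  classical
  -- admissible endomorphisms
  set gone : Submodule ℝ (Module.End ℝ V) :=
    g ⊔ Submodule.span ℝ {(1 : Module.End ℝ V)} with hgone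
  set Adm : Module.End ℝ V → Prop := fun H =>
    H ∈ gone ∧ (∀ x y, Q x (H y) = Q (H x) y) ∧ ∀ x ∈ X, H x = 0 with hAdm
  set U : Submodule ℝ V :=
    ⨅ (H : Module.End ℝ V) (_ : Adm H), LinearMap.ker H with hU
  have memU : ∀ v : V, v ∈ U ↔ ∀ H, Adm H → H v = 0 := by
    intro v
    simp [hU, Submodule.mem_iInf, LinearMap.mem_ker]
  -- Key step 1: if A ∈ g is antiselfadjoint, H admissible, then A*H - H*A admissible.
  have key1 : ∀ A ∈ g, (∀ x y, Q x (A y) = -Q (A x) y) →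
      ∀ H, Adm H → Adm (A * H - H * A) := by
    intro A hAg hAanti H ⟨hHm, hHsa, hHx⟩
    refine ⟨?_, ?_, ?_⟩
    · exact Submodule.mem_sup_left (aux_bracket_mem_voronoi g hbr hAg hHm)
    · intro x y
      simp only [LinearMap.sub_apply, Module.End.mul_apply, map_sub, LinearMap.sub_apply]
      rw [hAanti x (H y), hHsa x (A y), hAanti (H x) y, hHsa (A x) y]
      ring
    · -- selfadjoint, vanishes weakly on X, apply weak perfection with c = 0
      have hKg : A * H - H * A ∈ g := aux_bracket_mem_voronoi g hbr hAg hHm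
      have hKsa : ∀ x y, Q x ((A * H - H * A) y) = Q ((A * H - H * A) x) y := by
        intro x y
        simp only [LinearMap.sub_apply, Module.End.mul_apply, map_sub, LinearMap.sub_apply]
        rw [hAanti x (H y), hHsa x (A y), hAanti (H x) y, hHsa (A x) y]
        ring
      have h0 : ∀ x ∈ X, Q x ((A * H - H * A) x) = 0 * Q x x := by
        intro x hx
        simp only [LinearMap.sub_apply, Module.End.mul_apply, map_sub, hHx x hx, map_zero,
          zero_mul]
        rw [hHsa x (A x), hHx x hx]
        simp
      intro x hx
      have := hwp _ hKg hKsa 0 h0 x hx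
      simpa using this
  -- Key step 2: if B ∈ g is selfadjoint, H admissible, u ∈ U, then H (B u) = 0.
  have key2 : ∀ B ∈ g, (∀ x y, Q x (B y) = Q (B x) y) →
      ∀ H, Adm H → ∀ u ∈ U, H (B u) = 0 := by
    intro B hBg hBsa H hH u hu
    obtain ⟨hHm, hHsa, hHx⟩ := hH
    set K : Module.End ℝ V := H * B - B * H with hK
    have hKg : K ∈ g := by
      have := aux_bracket_mem_voronoi g hbr hBg hHm
      have h : K = -(B * H - H * B) := by rw [hK]; abel
      rw [h]; exact g.neg_mem this
    -- K is antiselfadjoint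
    have hKanti : ∀ x y, Q x (K y) = -Q (K x) y := by
      intro x y
      simp only [hK, LinearMap.sub_apply, Module.End.mul_apply, map_sub, LinearMap.sub_apply]
      rw [hHsa x (B y), hBsa x (H y), hHsa (B x) y, hBsa (H x) y]
      ring
    set D : Module.End ℝ V := K * H - H * K with hD
    have hDg : D ∈ g := aux_bracket_mem_voronoi g hbr hKg hHm
    have hDsa : ∀ x y, Q x (D y) = Q (D x) y := by
      intro x y
      simp only [hD, LinearMap.sub_apply, Module.End.mul_apply, map_sub, LinearMap.sub_apply]
      rw [hKanti x (H y), hHsa x (K y), hKanti (H x) y, hHsa (K x) y]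
      ring
    have hDX : ∀ x ∈ X, D x = 0 := by
      have h0 : ∀ x ∈ X, Q x (D x) = 0 * Q x x := by
        intro x hx
        have hKx : K x = H (B x) := by
          simp [hK, LinearMap.sub_apply, Module.End.mul_apply, hHx x hx]
        simp only [hD, LinearMap.sub_apply, Module.End.mul_apply, hHx x hx, map_zero,
          zero_sub, map_neg, hKx, zero_mul]
        rw [hHsa x (H (B x)), hHx x hx]
        simp
      intro x hx
      have := hwp _ hDg hDsa 0 h0 x hx
      simpa using this
    have hDadm : Adm D := ⟨Submodule.mem_sup_left hDg, hDsa, hDX⟩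
    -- now u ∈ U: H u = 0 and D u = 0, so H (H (B u)) = 0
    have hHu : H u = 0 := (memU u).mp hu H ⟨hHm, hHsa, hHx⟩
    have hDu : D u = 0 := (memU u).mp hu D hDadm
    have hKu : K u = H (B u) := by
      simp [hK, LinearMap.sub_apply, Module.End.mul_apply, hHu]
    have hHHBu : H (H (B u)) = 0 := by
      have : D u = K (H u) - H (K u) := by
        simp [hD, LinearMap.sub_apply, Module.End.mul_apply]
      rw [hDu, hHu, map_zero, zero_sub, hKu] at this
      have := this.symm
      simpa using congrArg Neg.neg this
    -- positivity: Q (H (B u)) (H (B u)) = Q (B u) (H (H (B u))) ... = 0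
    by_contra hne
    have hq : Q (H (B u)) (H (B u)) = 0 := by
      rw [hHsa (H (B u)) (B u), hHHBu]
      simp
    exact absurd hq (ne_of_gt (hpos _ hne))
  -- U contains X
  have hXU : ∀ x ∈ X, x ∈ U := by
    intro x hx
    exact (memU x).mpr fun H hH => hH.2.2 x hx
  -- U is proper: get a nonzero admissible element
  push_neg at hnp
  obtain ⟨H, hHg, hHsa, c, hHc, hHne⟩ := hnp
  have hHX : ∀ x ∈ X, H x = c • x := hwp H hHg hHsa c hHc
  set H₁ : Module.End ℝ V := H - c • 1 with hH₁
  have hH₁ne : H₁ ≠ 0 := sub_ne_zero.mpr hHne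
  have hH₁adm : Adm H₁ := by
    refine ⟨?_, ?_, ?_⟩
    · have h : H₁ = H + (-c) • (1 : Module.End ℝ V) := by
        rw [hH₁]; rw [sub_eq_add_neg, neg_smul]
      rw [h]
      exact Submodule.add_mem _ (Submodule.mem_sup_left hHg)
        (Submodule.mem_sup_right
          ((Submodule.span ℝ {(1 : Module.End ℝ V)}).smul_mem (-c)
            (Submodule.mem_span_singleton_self 1)))
    · intro x y
      simp only [hH₁, LinearMap.sub_apply, LinearMap.smul_apply, Module.End.one_apply,
        map_sub, map_smul, LinearMap.sub_apply, LinearMap.smul_apply, smul_eq_mul]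
      rw [hHsa x y, hsymm x y]
    · intro x hx
      simp [hH₁, hHX x hx]
  have hUne : U ≠ ⊤ := by
    intro htop
    apply hH₁ne
    ext v
    have hv : v ∈ U := htop ▸ Submodule.mem_top
    simpa using (memU v).mp hv H₁ hH₁adm
  -- invariance of U under g
  refine ⟨U, hUne, hXU, ?_⟩
  intro A hAg u hu
  obtain ⟨A', hA'g, hA'adj⟩ := hadj A hAg
  have hA'adj2 : ∀ x y, Q x (A' y) = Q (A x) y := by
    intro x y
    rw [hsymm x (A' y), ← hA'adj y x, hsymm y (A x)]
  set Ap : Module.End ℝ V := (2⁻¹ : ℝ) • (A + A') with hAp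
  set Ak : Module.End ℝ V := (2⁻¹ : ℝ) • (A - A') with hAk
  have hApg : Ap ∈ g := g.smul_mem _ (g.add_mem hAg hA'g)
  have hAkg : Ak ∈ g := g.smul_mem _ (g.sub_mem hAg hA'g)
  have hApsa : ∀ x y, Q x (Ap y) = Q (Ap x) y := by
    intro x y
    simp only [hAp, LinearMap.smul_apply, LinearMap.add_apply, map_smul, map_add,
      smul_eq_mul, LinearMap.smul_apply, LinearMap.add_apply]
    rw [hA'adj x y, hA'adj2 x y]
    ring
  have hAkanti : ∀ x y, Q x (Ak y) = -Q (Ak x) y := by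
    intro x y
    simp only [hAk, LinearMap.smul_apply, LinearMap.sub_apply, map_smul, map_sub,
      smul_eq_mul, LinearMap.smul_apply, LinearMap.sub_apply]
    rw [hA'adj x y, hA'adj2 x y]
    ring
  have hsplit : A u = Ap u + Ak u := by
    have : A = Ap + Ak := by
      rw [hAp, hAk]
      module
    rw [this]; simp
  rw [memU, hsplit]
  intro H hH
  have h1 : H (Ak u) = 0 := by
    have hKadm := key1 Ak hAkg hAkanti H hH
    have hKu : (Ak * H - H * Ak) u = 0 := (memU u).mp hu _ hKadm
    have hHu : H u = 0 := (memU u).mp hu H hH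
    simp only [LinearMap.sub_apply, Module.End.mul_apply, hHu, map_zero, zero_sub] at hKu
    simpa using congrArg Neg.neg hKu
  have h2 : H (Ap u) = 0 := key2 Ap hApg hApsa H hH u hu
  rw [map_add, h1, h2, add_zero]
end

section
/- Let K be a compact group of Q-orthogonal linear transformations of V acting transitively on a compact subset Ω of the projective space P(V) that spans V (i.e., representatives of Ω span V), and let H be a Q-selfadjoint endomorphism lying in a K-invariant-complement 𝔭 with 𝔭 ∩ ℝ·id = {0}. If the function f([x]) = Q(x, Hx)/Q(x) is constant on Ω and exp(tH)·Ω ⊆ Ω for all t ∈ ℝ, then H = 0. -/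
/-!
Put `A = H - c`. Constancy of the Rayleigh quotient says `Q(x, A x) = 0` on `S`, and since `S` is
stable under `exp(tH)` this persists along every orbit `t ↦ exp(tH) x`. Differentiating at `t = 0`
and using that `A` is `Q`-selfadjoint gives `2 Q(A x, A x) = 0`, so `A` vanishes on `S`, hence on
its span `V`. Thus `H = c · id ∈ 𝔭`, which forces `c = 0`.
-/

open NormedSpace

theorem LinearMap.hasDerivAt_of_bilinear {𝕜 E F G : Type*} [NontriviallyNormedField 𝕜]
    [CompleteSpace 𝕜] [NormedAddCommGroup E] [NormedSpace 𝕜 E] [FiniteDimensional 𝕜 E]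
    [NormedAddCommGroup F] [NormedSpace 𝕜 F] [FiniteDimensional 𝕜 F]
    [NormedAddCommGroup G] [NormedSpace 𝕜 G]
    (Q : E →ₗ[𝕜] F →ₗ[𝕜] G) {u : 𝕜 → E} {v : 𝕜 → F} {u' : E} {v' : F} {t : 𝕜}
    (hu : HasDerivAt u u' t) (hv : HasDerivAt v v' t) :
    HasDerivAt (fun s ↦ Q (u s) (v s)) (Q (u t) v' + Q u' (v t)) t := by
  let B : E →L[𝕜] F →L[𝕜] G :=
    LinearMap.toContinuousLinearMap (LinearMap.toContinuousLinearMap.toLinearMap ∘ₗ Q)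
  have := B.hasDerivWithinAt_of_bilinear (s := Set.univ) hu.hasDerivWithinAt hv.hasDerivWithinAt
  exact hasDerivWithinAt_univ.mp this

theorem hasDerivAt_exp_smul_apply {𝕂 V : Type*} [RCLike 𝕂] [NormedAddCommGroup V]
    [NormedSpace 𝕂 V] [CompleteSpace V] (H : V →L[𝕂] V) (x : V) (t : 𝕂) :
    HasDerivAt (fun s : 𝕂 ↦ exp (s • H) x) (exp (t • H) (H x)) t := by
  simpa using (hasDerivAt_exp_smul_const H t).clm_apply (hasDerivAt_const t x)

theorem apply_eq_smul_of_rayleigh_const_on_orbit {V : Type*} [NormedAddCommGroup V]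
    [NormedSpace ℝ V] [FiniteDimensional ℝ V] {Q : V →ₗ[ℝ] V →ₗ[ℝ] ℝ}
    (hpos : ∀ x : V, x ≠ 0 → 0 < Q x x) {H : V →L[ℝ] V} (hH : Q.IsSelfAdjoint H) {c : ℝ}
    {x : V} (horbit : ∀ t : ℝ, Q (exp (t • H) x) (H (exp (t • H) x)) =
      c * Q (exp (t • H) x) (exp (t • H) x)) :
    H x = c • x := by
  set A : V →L[ℝ] V := H - c • 1
  have hAapp (y : V) : A y = H y - c • y := rfl
  have hA (y z : V) : Q (A y) z = Q y (A z) := by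
    simp only [hAapp, map_sub, map_smul, LinearMap.sub_apply, LinearMap.smul_apply, hH y z]
  have hisotropic (t : ℝ) : Q (exp (t • H) x) (A (exp (t • H) x)) = 0 := by
    simp only [hAapp, map_sub, map_smul, horbit t, smul_eq_mul, sub_self]
  have hx : Q x (A x) = 0 := by simpa using hisotropic 0
  have hderiv : HasDerivAt (fun t : ℝ ↦ Q (exp (t • H) x) (A (exp (t • H) x)))
      (Q x (A (H x)) + Q (H x) (A x)) 0 := by
    have hu := hasDerivAt_exp_smul_apply H x 0
    simp only [zero_smul, exp_zero, one_apply_eq_self] at hu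
    simpa using Q.hasDerivAt_of_bilinear hu (A.hasFDerivAt.comp_hasDerivAt 0 hu)
  have hHx : H x = A x + c • x := by rw [hAapp]; abel
  have hsum : Q x (A (H x)) + Q (H x) (A x) = 2 * Q (A x) (A x) := by
    rw [← hA x (H x), hHx]
    simp only [map_add, map_smul, LinearMap.add_apply, LinearMap.smul_apply, hA x x, hx,
      smul_eq_mul]
    ring
  have hAx : Q (A x) (A x) = 0 := by
    have := hderiv.unique (by simpa only [hisotropic] using hasDerivAt_const (0 : ℝ) (0 : ℝ))
    linarith
  have : A x = 0 := by
    by_contra hne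
    exact (hpos _ hne).ne' hAx
  rwa [hAapp, sub_eq_zero] at this

theorem no_constant_function_general
    {V : Type*} [NormedAddCommGroup V] [NormedSpace ℝ V] [FiniteDimensional ℝ V]
    (Q : V →ₗ[ℝ] V →ₗ[ℝ] ℝ)
    (hpos : ∀ x : V, x ≠ 0 → 0 < Q x x)
    (S : Set V)
    (hspan : Submodule.span ℝ S = ⊤)
    (𝔭 : Submodule ℝ (V →L[ℝ] V))
    (hsa : ∀ J ∈ 𝔭, ∀ x y, Q x (J y) = Q (J x) y)
    (hid : ∀ c : ℝ, c • (1 : V →L[ℝ] V) ∈ 𝔭 → c = 0)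
    (H : V →L[ℝ] V) (hH : H ∈ 𝔭)
    (c : ℝ) (hconst : ∀ x ∈ S, Q x (H x) = c * Q x x)
    (hstable : ∀ t : ℝ, ∀ x ∈ S, NormedSpace.exp (t • H) x ∈ S) :
    H = 0 := by
  have hHS : Set.EqOn H (c • (1 : V →L[ℝ] V)) S := fun x hx ↦
    apply_eq_smul_of_rayleigh_const_on_orbit hpos (fun y z ↦ (hsa H hH y z).symm)
      fun t ↦ hconst _ (hstable t x hx)
  have hHc : H = c • 1 := ContinuousLinearMap.coe_injective (LinearMap.ext_on hspan hHS)
  rw [hHc, hid c (hHc ▸ hH), zero_smul]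

/-- No-constant-function lemma: let `S ⊆ V∖{0}` be a scale-stable set spanning
`V` (representing a subset `Ω` of projective space), and let `H` be a
`Q`-selfadjoint operator lying in a subspace `𝔭` with `𝔭 ∩ ℝ·id = 0`.
If `[x] ↦ Q(x,Hx)/Q(x)` is constant on `Ω` and `Ω` is stable under
`exp(tH)` for all `t`, then `H = 0`. -/
theorem no_constant_function
    {V : Type*} [NormedAddCommGroup V] [NormedSpace ℝ V] [FiniteDimensional ℝ V]
    (Q : V →ₗ[ℝ] V →ₗ[ℝ] ℝ)
    (hsymm : ∀ x y, Q x y = Q y x) (hpos : ∀ x : V, x ≠ 0 → 0 < Q x x)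
    (S : Set V) (hS0 : (0 : V) ∉ S)
    (hscale : ∀ x ∈ S, ∀ c : ℝ, c ≠ 0 → c • x ∈ S)
    (hspan : Submodule.span ℝ S = ⊤)
    (𝔭 : Submodule ℝ (V →L[ℝ] V))
    (hsa : ∀ J ∈ 𝔭, ∀ x y, Q x (J y) = Q (J x) y)
    (hid : ∀ c : ℝ, c • (1 : V →L[ℝ] V) ∈ 𝔭 → c = 0)
    (H : V →L[ℝ] V) (hH : H ∈ 𝔭)
    (c : ℝ) (hconst : ∀ x ∈ S, Q x (H x) = c * Q x x)
    (hstable : ∀ t : ℝ, ∀ x ∈ S, NormedSpace.exp (t • H) x ∈ S) :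
    H = 0 :=
  no_constant_function_general Q hpos S hspan 𝔭 hsa hid H hH c hconst hstable
end

section
/- With notation as in the regular alternative Voronoi space setting: for every H ∈ 𝔭 (Q-selfadjoint elements of the Lie algebra 𝔤), the average over Ω of the function f([x]) = Q(x, Hx)/Q(x) with respect to the unique K-invariant probability measure μ vanishes: ∫_Ω Q(x,Hx)/Q(x) dμ([x]) = 0. -/
/-!
Average `H` over `K`: `H^K = ∫ ρ(k) H ρ(k)⁻¹ dk` lies in `𝔭` and commutes with every `ρ(k)`.
Because `μ` is `K`-invariant, Fubini turns `∫_Ω Q(x,Hx)/Q(x) dμ` into `∫_Ω Q(x,H^K x)/Q(x) dμ`.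
The Rayleigh quotient of `H^K` is `K`-invariant, hence constant on the orbit `Ω`; a selfadjoint
operator whose Rayleigh quotient is constant `c` on `Ω` equals `c • 1` (differentiate along its
exponential flow, which preserves `Ω` projectively), and `c • 1 ∈ 𝔭` forces `c = 0`.
-/

open MeasureTheory

def repOp {V : Type*} [NormedAddCommGroup V] [NormedSpace ℝ V]
    {K : Type*} [Group K] (ρ : K →* (V →L[ℝ] V)ˣ) (k : K) : V →L[ℝ] V :=
  (ρ k : (V →L[ℝ] V)ˣ)

section RepOp

variable {V : Type*} [NormedAddCommGroup V] [NormedSpace ℝ V] {K : Type*} [Group K]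
  (ρ : K →* (V →L[ℝ] V)ˣ)

lemma repOp_mul (a b : K) : repOp ρ (a * b) = repOp ρ a * repOp ρ b := by
  simp [repOp]

lemma repOp_one : repOp ρ 1 = 1 := by
  simp [repOp]

lemma repOp_inv_apply_repOp_apply (k : K) (x : V) : repOp ρ k⁻¹ (repOp ρ k x) = x := by
  rw [← mul_apply_eq_comp, ← repOp_mul, inv_mul_cancel, repOp_one,
    one_apply_eq_self]

lemma repOp_apply_repOp_inv_apply (k : K) (x : V) : repOp ρ k (repOp ρ k⁻¹ x) = x := by
  simpa using repOp_inv_apply_repOp_apply ρ k⁻¹ x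

lemma preimage_repOp_of_forall_mapsTo {Ω : Set V} (hΩK : ∀ k : K, ∀ x ∈ Ω, repOp ρ k x ∈ Ω)
    (k : K) : repOp ρ k ⁻¹' Ω = Ω :=
  Set.Subset.antisymm
    (fun x hx => repOp_inv_apply_repOp_apply ρ k x ▸ hΩK k⁻¹ _ hx) (hΩK k)

end RepOp

section Rayleigh

variable {V : Type*} [NormedAddCommGroup V] [NormedSpace ℝ V] (Q : V →ₗ[ℝ] V →ₗ[ℝ] ℝ)

noncomputable def rayleighQuotient (J : V →L[ℝ] V) (x : V) : ℝ :=
  Q x (J x) / Q x x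

lemma rayleighQuotient_repOp_apply {K : Type*} [Group K] {ρ : K →* (V →L[ℝ] V)ˣ}
    (hρorth : ∀ k : K, ∀ x y : V, Q (repOp ρ k x) (repOp ρ k y) = Q x y)
    (J : V →L[ℝ] V) (k : K) (x : V) :
    rayleighQuotient Q J (repOp ρ k x) = rayleighQuotient Q (repOp ρ k⁻¹ * J * repOp ρ k) x := by
  have hJ : J (repOp ρ k x) = repOp ρ k ((repOp ρ k⁻¹ * J * repOp ρ k) x) := by
    simp only [mul_apply_eq_comp, repOp_apply_repOp_inv_apply]
  rw [rayleighQuotient, rayleighQuotient, hJ, hρorth, hρorth]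

variable [FiniteDimensional ℝ V]

lemma continuousOn_rayleighQuotient {X : Type*} [TopologicalSpace X] {J : X → V →L[ℝ] V}
    {v : X → V} {s : Set X} (hJ : Continuous J) (hv : Continuous v)
    (hs : ∀ p ∈ s, Q (v p) (v p) ≠ 0) :
    ContinuousOn (fun p => rayleighQuotient Q (J p) (v p)) s := by
  have hQ := Q.toContinuousBilinearMap.continuous
  exact ((hQ.comp hv).clm_apply (hJ.clm_apply hv)).continuousOn.div
    ((hQ.comp hv).clm_apply hv).continuousOn hs

lemma integral_rayleighQuotient {X : Type*} [MeasurableSpace X]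
    {ν : Measure X} {J : X → V →L[ℝ] V} (hJ : Integrable J ν) (x : V) :
    ∫ k, rayleighQuotient Q (J k) x ∂ν = rayleighQuotient Q (∫ k, J k ∂ν) x := by
  let L : (V →L[ℝ] V) →L[ℝ] ℝ :=
    (Q.toContinuousBilinearMap x).comp (ContinuousLinearMap.apply ℝ V x)
  simp only [rayleighQuotient, integral_div]
  exact congrArg (· / Q x x) (L.integral_comp_comm hJ)

variable {Q}

/-- Differentiating `Q y (J y) - c * Q y y` along `y = exp (t • J) x` at `t = 0` gives
`Q (J x - c • x) (J x - c • x) = 0`. -/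
lemma apply_eq_smul_of_forall_exp_smul (hsymm : ∀ x y, Q x y = Q y x)
    (hpos : ∀ x : V, x ≠ 0 → 0 < Q x x) {J : V →L[ℝ] V} (hJ : ∀ x y, Q x (J y) = Q (J x) y)
    {c : ℝ} {x : V}
    (hflow : ∀ t : ℝ, Q (NormedSpace.exp (t • J) x) (J (NormedSpace.exp (t • J) x))
      = c * Q (NormedSpace.exp (t • J) x) (NormedSpace.exp (t • J) x)) :
    J x = c • x := by
  set B := Q.toContinuousBilinearMap
  set y : ℝ → V := fun t => NormedSpace.exp (t • J) x
  have hy : ∀ t, HasDerivAt y (J (y t)) t := fun t =>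
    (ContinuousLinearMap.apply ℝ V x).hasFDerivAt.comp_hasDerivAt t (hasDerivAt_exp_smul_const' J t)
  have hy0 : y 0 = x := by simp [y]
  have hderiv := (ContinuousLinearMap.hasDerivAt_of_bilinear (B := B) (fun _ => hy 0)
    (fun _ => J.hasFDerivAt.comp_hasDerivAt 0 (hy 0))).sub
    ((ContinuousLinearMap.hasDerivAt_of_bilinear (B := B) (fun _ => hy 0)
      (fun _ => hy 0)).const_mul c)
  have hzero : ((fun t => B (y t) ((J ∘ y) t)) - fun t => c * B (y t) (y t)) = fun _ => 0 := by
    funext t; simp [B, y, hflow t]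
  rw [hzero] at hderiv
  have hderiv0 := hderiv.unique (hasDerivAt_const 0 0)
  simp only [hy0, Function.comp_apply, B, LinearMap.toContinuousBilinearMap_apply] at hderiv0
  have hx : Q x (J x) = c * Q x x := by simpa using hflow 0
  have hsq : Q (J x - c • x) (J x - c • x) = 0 := by
    simp only [map_sub, map_smul, LinearMap.sub_apply, LinearMap.smul_apply, smul_eq_mul]
    linear_combination (hderiv0 - hJ x (J x) - c * hsymm (J x) x) / 2 - c * hx
  by_contra hne
  exact (hpos _ (sub_ne_zero.2 hne)).ne' hsq

lemma eq_smul_one_of_forall_mem_apply_eq (hsymm : ∀ x y, Q x y = Q y x)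
    (hpos : ∀ x : V, x ≠ 0 → 0 < Q x x) {Ω : Set V} (hΩspan : Submodule.span ℝ Ω = ⊤)
    {J : V →L[ℝ] V} (hJ : ∀ x y, Q x (J y) = Q (J x) y)
    (hexp : ∀ t : ℝ, ∀ x ∈ Ω, ∃ a : ℝ, a ≠ 0 ∧ a • NormedSpace.exp (t • J) x ∈ Ω)
    {c : ℝ} (hc : ∀ x ∈ Ω, Q x (J x) = c * Q x x) :
    J = c • (1 : V →L[ℝ] V) := by
  refine ContinuousLinearMap.coe_injective (LinearMap.ext_on hΩspan fun x hx => ?_)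
  refine apply_eq_smul_of_forall_exp_smul hsymm hpos hJ fun t => ?_
  obtain ⟨a, ha, hmem⟩ := hexp t x hx
  have hscaled := hc _ hmem
  simp only [map_smul, LinearMap.smul_apply, smul_eq_mul] at hscaled
  exact mul_left_cancel₀ (mul_ne_zero ha ha) (by linear_combination hscaled)

end Rayleigh

lemma setIntegral_comp_repOp {V : Type*} [NormedAddCommGroup V] [NormedSpace ℝ V]
    [MeasurableSpace V] [BorelSpace V] {K : Type*} [Group K] {ρ : K →* (V →L[ℝ] V)ˣ}
    {Ω : Set V} (hΩK : ∀ k : K, ∀ x ∈ Ω, repOp ρ k x ∈ Ω) {μ : Measure V}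
    (hμinv : ∀ k : K, Measure.map (repOp ρ k) μ = μ) {E : Type*} [NormedAddCommGroup E]
    [NormedSpace ℝ E] (f : V → E) (k : K) :
    ∫ x in Ω, f (repOp ρ k x) ∂μ = ∫ x in Ω, f x ∂μ := by
  have hemb : MeasurableEmbedding (repOp ρ k) :=
    (ContinuousLinearEquiv.unitsEquiv ℝ V (ρ k)).toHomeomorph.measurableEmbedding
  have hpres : MeasurePreserving (repOp ρ k) μ μ := ⟨hemb.measurable, hμinv k⟩
  simpa only [preimage_repOp_of_forall_mapsTo ρ hΩK] using
    hpres.setIntegral_preimage_emb hemb f Ω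

/-- The paper's `H^K = ∫ k⁻¹ H k dk` with `k` replaced by `k⁻¹`: the same operator, but its
invariance only needs left invariance of `ν`. -/
noncomputable def conjAverage {V : Type*} [NormedAddCommGroup V] [NormedSpace ℝ V]
    {K : Type*} [Group K] [MeasurableSpace K] (ρ : K →* (V →L[ℝ] V)ˣ) (ν : Measure K)
    (H : V →L[ℝ] V) : V →L[ℝ] V :=
  ∫ k, repOp ρ k * H * repOp ρ k⁻¹ ∂ν

section Average

variable {V : Type*} [NormedAddCommGroup V] [NormedSpace ℝ V]
  {K : Type*} [Group K] [TopologicalSpace K] [IsTopologicalGroup K] [CompactSpace K]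
  [MeasurableSpace K] [BorelSpace K] {ρ : K →* (V →L[ℝ] V)ˣ}
  (ν : Measure K) [IsFiniteMeasure ν] (H : V →L[ℝ] V)

lemma integrable_repOp_mul_mul_repOp_inv (hρcont : Continuous fun k : K => repOp ρ k) :
    Integrable (fun k => repOp ρ k * H * repOp ρ k⁻¹) ν :=
  ((hρcont.mul continuous_const).mul (hρcont.comp continuous_inv)).integrable_of_hasCompactSupport
    (HasCompactSupport.of_compactSpace _)

lemma conjAverage_mem [FiniteDimensional ℝ V] (hρcont : Continuous fun k : K => repOp ρ k)
    [IsProbabilityMeasure ν] (𝔭 : Submodule ℝ (V →L[ℝ] V))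
    (hconj : ∀ k : K, ∀ J ∈ 𝔭, repOp ρ k⁻¹ * J * repOp ρ k ∈ 𝔭) (hH : H ∈ 𝔭) :
    conjAverage ρ ν H ∈ 𝔭 :=
  Convex.integral_mem 𝔭.convex 𝔭.closed_of_finiteDimensional
    (ae_of_all _ fun k => by simpa using hconj k⁻¹ H hH)
    (integrable_repOp_mul_mul_repOp_inv ν H hρcont)

lemma repOp_inv_mul_conjAverage_mul_repOp (hρcont : Continuous fun k : K => repOp ρ k)
    [ν.IsMulLeftInvariant] (m : K) :
    repOp ρ m⁻¹ * conjAverage ρ ν H * repOp ρ m = conjAverage ρ ν H := by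
  have hint := integrable_repOp_mul_mul_repOp_inv ν H hρcont
  calc repOp ρ m⁻¹ * conjAverage ρ ν H * repOp ρ m
      = ∫ k, repOp ρ m⁻¹ * (repOp ρ k * H * repOp ρ k⁻¹) * repOp ρ m ∂ν := by
        rw [conjAverage, ← integral_const_mul_of_integrable hint,
          ← integral_mul_const_of_integrable (hint.const_mul _)]
    _ = ∫ k, repOp ρ (m⁻¹ * k) * H * repOp ρ (m⁻¹ * k)⁻¹ ∂ν := by
        simp only [mul_inv_rev, inv_inv, repOp_mul, mul_assoc]
    _ = conjAverage ρ ν H := integral_mul_left_eq_self (fun k => repOp ρ k * H * repOp ρ k⁻¹) m⁻¹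

end Average

lemma setIntegral_rayleighQuotient_conjAverage {V : Type*} [NormedAddCommGroup V]
    [NormedSpace ℝ V] [FiniteDimensional ℝ V] [MeasurableSpace V] [BorelSpace V]
    {K : Type*} [Group K] [TopologicalSpace K] [IsTopologicalGroup K] [CompactSpace K]
    [MeasurableSpace K] [BorelSpace K] (Q : V →ₗ[ℝ] V →ₗ[ℝ] ℝ) {ρ : K →* (V →L[ℝ] V)ˣ}
    (hρcont : Continuous fun k : K => repOp ρ k)
    (hρorth : ∀ k : K, ∀ x y : V, Q (repOp ρ k x) (repOp ρ k y) = Q x y)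
    {Ω : Set V} (hΩcomp : IsCompact Ω) (hΩQ : ∀ x ∈ Ω, Q x x ≠ 0)
    (hΩK : ∀ k : K, ∀ x ∈ Ω, repOp ρ k x ∈ Ω) {μ : Measure V} [IsFiniteMeasure μ]
    (hμinv : ∀ k : K, Measure.map (repOp ρ k) μ = μ) (ν : Measure K) [IsProbabilityMeasure ν]
    (H : V →L[ℝ] V) :
    ∫ x in Ω, rayleighQuotient Q H x ∂μ
      = ∫ x in Ω, rayleighQuotient Q (conjAverage ρ ν H) x ∂μ := by
  set F : V → K → ℝ := fun x k => rayleighQuotient Q (repOp ρ k * H * repOp ρ k⁻¹) x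
  have hFk : ∀ k, ∫ x in Ω, F x k ∂μ = ∫ x in Ω, rayleighQuotient Q H x ∂μ := fun k => by
    rw [← setIntegral_comp_repOp hΩK hμinv (rayleighQuotient Q H) k⁻¹]
    simp only [F, rayleighQuotient_repOp_apply Q hρorth, inv_inv]
  have hF : Integrable (Function.uncurry F) ((μ.restrict Ω).prod ν) := by
    rw [← Measure.restrict_univ (μ := ν), Measure.prod_restrict]
    refine ContinuousOn.integrableOn_compact' (hΩcomp.prod isCompact_univ)
      (hΩcomp.isClosed.measurableSet.prod MeasurableSet.univ) ?_
    exact continuousOn_rayleighQuotient Q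
      (((hρcont.comp continuous_snd).mul continuous_const).mul
        (hρcont.comp (continuous_inv.comp continuous_snd))) continuous_fst
      fun p hp => hΩQ p.1 hp.1
  calc ∫ x in Ω, rayleighQuotient Q H x ∂μ = ∫ k, ∫ x in Ω, F x k ∂μ ∂ν := by simp [hFk]
    _ = ∫ x in Ω, ∫ k, F x k ∂ν ∂μ := (integral_integral_swap hF).symm
    _ = ∫ x in Ω, rayleighQuotient Q (conjAverage ρ ν H) x ∂μ := by
      simp only [F, integral_rayleighQuotient Q (integrable_repOp_mul_mul_repOp_inv ν H hρcont),
        conjAverage]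

instance isProbabilityMeasure_haarMeasure_top {G : Type*} [Group G] [TopologicalSpace G]
    [IsTopologicalGroup G] [CompactSpace G] [MeasurableSpace G] [BorelSpace G] :
    IsProbabilityMeasure (Measure.haarMeasure (⊤ : TopologicalSpace.PositiveCompacts G)) :=
  ⟨by simpa using Measure.haarMeasure_self (K₀ := (⊤ : TopologicalSpace.PositiveCompacts G))⟩

theorem average_quadratic_function_zero_general
    {V : Type*} [NormedAddCommGroup V] [NormedSpace ℝ V] [FiniteDimensional ℝ V]
    [MeasurableSpace V] [BorelSpace V]
    {K : Type*} [Group K] [TopologicalSpace K] [IsTopologicalGroup K] [CompactSpace K]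
    (Q : V →ₗ[ℝ] V →ₗ[ℝ] ℝ)
    (hsymm : ∀ x y, Q x y = Q y x) (hpos : ∀ x : V, x ≠ 0 → 0 < Q x x)
    (ρ : K →* (V →L[ℝ] V)ˣ)
    (hρcont : Continuous fun k : K => repOp ρ k)
    (hρorth : ∀ k : K, ∀ x y : V, Q (repOp ρ k x) (repOp ρ k y) = Q x y)
    (Ω : Set V) (hΩcomp : IsCompact Ω) (hΩ0 : (0 : V) ∉ Ω)
    (hΩspan : Submodule.span ℝ Ω = ⊤)
    (hΩK : ∀ k : K, ∀ x ∈ Ω, repOp ρ k x ∈ Ω)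
    (hΩtrans : ∀ x ∈ Ω, ∀ y ∈ Ω, ∃ k : K, repOp ρ k x = y)
    (μ : Measure V) [IsProbabilityMeasure μ]
    (hμinv : ∀ k : K, Measure.map (repOp ρ k) μ = μ)
    (𝔭 : Submodule ℝ (V →L[ℝ] V))
    (hsa : ∀ J ∈ 𝔭, ∀ x y, Q x (J y) = Q (J x) y)
    (hid : ∀ c : ℝ, c • (1 : V →L[ℝ] V) ∈ 𝔭 → c = 0)
    (hconj : ∀ k : K, ∀ J ∈ 𝔭, repOp ρ k⁻¹ * J * repOp ρ k ∈ 𝔭)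
    (hexp : ∀ J ∈ 𝔭, ∀ t : ℝ, ∀ x ∈ Ω,
        ∃ c : ℝ, c ≠ 0 ∧ c • (NormedSpace.exp (t • J) x) ∈ Ω)
    (H : V →L[ℝ] V) (hH : H ∈ 𝔭) :
    ∫ x in Ω, Q x (H x) / Q x x ∂μ = 0 := by
  let _ : MeasurableSpace K := borel K
  have _ : BorelSpace K := ⟨rfl⟩
  let ν := Measure.haarMeasure (⊤ : TopologicalSpace.PositiveCompacts K)
  set A := conjAverage ρ ν H
  rcases Ω.eq_empty_or_nonempty with rfl | ⟨x₀, hx₀⟩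
  · simp
  have hΩQ : ∀ x ∈ Ω, Q x x ≠ 0 := fun x hx => (hpos x (ne_of_mem_of_not_mem hx hΩ0)).ne'
  have hAmem : A ∈ 𝔭 := conjAverage_mem ν H hρcont 𝔭 hconj hH
  have hAinv : ∀ x ∈ Ω, rayleighQuotient Q A x = rayleighQuotient Q A x₀ := by
    intro x hx
    obtain ⟨k, rfl⟩ := hΩtrans x₀ hx₀ x hx
    rw [rayleighQuotient_repOp_apply Q hρorth, repOp_inv_mul_conjAverage_mul_repOp ν H hρcont]
  have hAconst : ∀ x ∈ Ω, Q x (A x) = rayleighQuotient Q A x₀ * Q x x := fun x hx => by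
    rw [← hAinv x hx, rayleighQuotient, div_mul_cancel₀ _ (hΩQ x hx)]
  have hA : A = rayleighQuotient Q A x₀ • (1 : V →L[ℝ] V) :=
    eq_smul_one_of_forall_mem_apply_eq hsymm hpos hΩspan (hsa A hAmem) (hexp A hAmem) hAconst
  have hc : rayleighQuotient Q A x₀ = 0 := hid _ (hA ▸ hAmem)
  rw [hc, zero_smul] at hA
  calc ∫ x in Ω, Q x (H x) / Q x x ∂μ = ∫ x in Ω, rayleighQuotient Q A x ∂μ :=
        setIntegral_rayleighQuotient_conjAverage Q hρcont hρorth hΩcomp hΩQ hΩK hμinv ν H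
    _ = 0 := by simp [hA, rayleighQuotient]

/-- In a regular alternative Voronoi space, for every `Q`-selfadjoint `H` in `𝔭`
the average over the orbit `Ω` of `[x] ↦ Q(x,Hx)/Q(x)` with respect to the
unique `K`-invariant probability measure vanishes. -/
theorem average_quadratic_function_zero
    {V : Type*} [NormedAddCommGroup V] [NormedSpace ℝ V] [FiniteDimensional ℝ V]
    [MeasurableSpace V] [BorelSpace V]
    {K : Type*} [Group K] [TopologicalSpace K] [IsTopologicalGroup K] [CompactSpace K]
    (Q : V →ₗ[ℝ] V →ₗ[ℝ] ℝ)
    (hsymm : ∀ x y, Q x y = Q y x) (hpos : ∀ x : V, x ≠ 0 → 0 < Q x x)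
    (ρ : K →* (V →L[ℝ] V)ˣ)
    (hρcont : Continuous fun k : K => repOp ρ k)
    (hρorth : ∀ k : K, ∀ x y : V, Q (repOp ρ k x) (repOp ρ k y) = Q x y)
    (Ω : Set V) (hΩcomp : IsCompact Ω) (hΩ0 : (0 : V) ∉ Ω)
    (hΩspan : Submodule.span ℝ Ω = ⊤)
    (hΩK : ∀ k : K, ∀ x ∈ Ω, repOp ρ k x ∈ Ω)
    (hΩtrans : ∀ x ∈ Ω, ∀ y ∈ Ω, ∃ k : K, repOp ρ k x = y)
    (μ : Measure V) [IsProbabilityMeasure μ] (hμΩ : μ Ω = 1)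
    (hμinv : ∀ k : K, Measure.map (repOp ρ k) μ = μ)
    (𝔭 : Submodule ℝ (V →L[ℝ] V))
    (hsa : ∀ J ∈ 𝔭, ∀ x y, Q x (J y) = Q (J x) y)
    (hid : ∀ c : ℝ, c • (1 : V →L[ℝ] V) ∈ 𝔭 → c = 0)
    (hconj : ∀ k : K, ∀ J ∈ 𝔭, repOp ρ k⁻¹ * J * repOp ρ k ∈ 𝔭)
    (hexp : ∀ J ∈ 𝔭, ∀ t : ℝ, ∀ x ∈ Ω,
        ∃ c : ℝ, c ≠ 0 ∧ c • (NormedSpace.exp (t • J) x) ∈ Ω)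
    (H : V →L[ℝ] V) (hH : H ∈ 𝔭) :
    ∫ x in Ω, Q x (H x) / Q x x ∂μ = 0 :=
  average_quadratic_function_zero_general Q hsymm hpos ρ hρcont hρorth Ω hΩcomp hΩ0 hΩspan hΩK
    hΩtrans μ hμinv 𝔭 hsa hid hconj hexp H hH
end

section
/- If (X, W) is a weighted design of strength {2} on Ω (i.e., Σ_{ξ∈X} W_ξ f(ξ) = ∫_Ω f dμ for all f in the span of [x] ↦ Q(x,Hx)/Q(x), H ∈ 𝔭), then (Q, X) is eutactic: for every H ∈ 𝔭, if Q(x,Hx)/Q(x) > 0 for some [x] ∈ X, then Q(y,Hy)/Q(y) < 0 for some [y] ∈ X. If moreover W is the uniform weight, (Q, X) is strongly eutactic: Σ_{[x]∈X} Q(x,Hx)/Q(x) = 0 for all H ∈ 𝔭. -/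
open MeasureTheory

/-- A weighted design of strength `{2}` on `Ω` is eutactic; an (unweighted)
design of strength `{2}` is strongly eutactic. -/
theorem weighted_two_design_eutactic
    {V : Type*} [AddCommGroup V] [Module ℝ V] [MeasurableSpace V]
    (Q : V →ₗ[ℝ] V →ₗ[ℝ] ℝ)
    (hsymm : ∀ x y, Q x y = Q y x) (hpos : ∀ x : V, x ≠ 0 → 0 < Q x x)
    (Ω : Set V) (hΩ0 : (0 : V) ∉ Ω)
    (μ : Measure V) [IsProbabilityMeasure μ] (hμΩ : μ Ω = 1)
    (𝔭 : Submodule ℝ (Module.End ℝ V))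
    (hsa : ∀ H ∈ 𝔭, ∀ x y, Q x (H y) = Q (H x) y)
    (havg : ∀ H ∈ 𝔭, ∫ x in Ω, Q x (H x) / Q x x ∂μ = 0)
    (X : Finset V) (hXne : X.Nonempty) (hXΩ : ↑X ⊆ Ω)
    (W : V → ℝ) (hWpos : ∀ x ∈ X, 0 < W x) (hWsum : ∑ x ∈ X, W x = 1)
    (hdesign : ∀ H ∈ 𝔭, ∑ x ∈ X, W x * (Q x (H x) / Q x x) =
        ∫ x in Ω, Q x (H x) / Q x x ∂μ) :
    (∀ H ∈ 𝔭, (∃ x ∈ X, 0 < Q x (H x) / Q x x) → ∃ y ∈ X, Q y (H y) / Q y y < 0) ∧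
    ((∀ x ∈ X, W x = (X.card : ℝ)⁻¹) →
      ∀ H ∈ 𝔭, ∑ x ∈ X, Q x (H x) / Q x x = 0) := by
  constructor
  · intro H hH ⟨x, hx, hxpos⟩
    by_contra hcon
    push_neg at hcon
    have hzero : ∑ y ∈ X, W y * (Q y (H y) / Q y y) = 0 := by
      rw [hdesign H hH, havg H hH]
    have hterm : ∀ y ∈ X, 0 ≤ W y * (Q y (H y) / Q y y) := fun y hy =>
      mul_nonneg (hWpos y hy).le (hcon y hy)
    have hx0 : W x * (Q x (H x) / Q x x) = 0 :=
      (Finset.sum_eq_zero_iff_of_nonneg hterm).mp hzero x hx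
    have := mul_pos (hWpos x hx) hxpos
    linarith
  · intro hW H hH
    have hzero : ∑ y ∈ X, W y * (Q y (H y) / Q y y) = 0 := by
      rw [hdesign H hH, havg H hH]
    have hcard : (0 : ℝ) < (X.card : ℝ) := by
      exact_mod_cast Finset.card_pos.mpr hXne
    have : ∑ y ∈ X, W y * (Q y (H y) / Q y y)
        = (X.card : ℝ)⁻¹ * ∑ y ∈ X, Q y (H y) / Q y y := by
      rw [Finset.mul_sum]
      exact Finset.sum_congr rfl fun y hy => by rw [hW y hy]
    rw [this] at hzero
    have hinv : ((X.card : ℝ)⁻¹) ≠ 0 := inv_ne_zero hcard.ne'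
    exact (mul_eq_zero.mp hzero).resolve_left hinv
end

section
/- If (X, W) is a weighted design of strength {2,2} on Ω (exact cubature for all products of two functions of the form [x] ↦ Q(x,Hx)/Q(x), H ∈ 𝔭 ⊕ ℝ·id), then (Q, X) is perfect: for every H ∈ 𝔭, if there is c ∈ ℝ with Q(x,Hx)/Q(x) = c for all [x] ∈ X, then H = c·id (hence H = 0, c = 0). The key step: the nonnegative function f([x]) = (Q(x,Hx)/Q(x) − c)² lies in ℱ_{2,2}, its weighted sum over X is zero, hence its average over Ω is zero, hence f ≡ 0 on Ω, forcing H = c·id by the no-constant-function lemma. -/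
/-!
Write `A = H - c • 1`. The function `x ↦ (Q(x, A x) / Q(x, x))²` lies in `ℱ_{2,2}` and vanishes
on `X`, so by the design property its integral over `Ω` is zero; being continuous and nonnegative
on the support of `μ`, it vanishes on `Ω`. As `Ω` is projectively invariant under `exp (t • H)`,
`Q(x, A x)` also vanishes along these flow lines, and differentiating at `t = 0` gives
`Q(H x, A x) + Q(x, A (H x)) = 0`. Self-adjointness of `H` turns this into `2 Q(A x, A x) = 0`,
so `A` vanishes on the spanning set `Ω`.
-/

open MeasureTheory

theorem MeasureTheory.eqOn_zero_of_setIntegral_eq_zero_of_nonneg {X : Type*} [TopologicalSpace X]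
    [MeasurableSpace X] {μ : Measure X} {s : Set X} {f : X → ℝ} (hs : MeasurableSet s)
    (hsupp : ∀ U : Set X, IsOpen U → (U ∩ s).Nonempty → 0 < μ (U ∩ s))
    (hf : ContinuousOn f s) (hfi : IntegrableOn f s μ) (hf0 : ∀ x ∈ s, 0 ≤ f x)
    (h : ∫ x in s, f x ∂μ = 0) : Set.EqOn f 0 s := by
  have hae : f =ᵐ[μ.restrict s] 0 :=
    (setIntegral_eq_zero_iff_of_nonneg_ae (ae_restrict_of_forall_mem hs hf0) hfi).1 h
  intro x hx
  by_contra hfx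
  obtain ⟨U, hU, hUs⟩ := continuousOn_iff'.1 hf {0}ᶜ isOpen_compl_singleton
  have hnull : μ (U ∩ s) = 0 := by
    rw [← hUs, ← Measure.restrict_apply' hs]
    exact ae_iff.1 hae
  exact (hsupp U hU ⟨x, hUs ▸ ⟨hfx, hx⟩⟩).ne' hnull

section
variable {V : Type*} [NormedAddCommGroup V] [NormedSpace ℝ V] [FiniteDimensional ℝ V]

theorem hasDerivAt_bilin_exp_smul_apply (Q : V →ₗ[ℝ] V →ₗ[ℝ] ℝ) (A H : V →L[ℝ] V) (x : V) :
    HasDerivAt (fun t : ℝ => Q (NormedSpace.exp (t • H) x) (A (NormedSpace.exp (t • H) x)))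
      (Q (H x) (A x) + Q x (A (H x))) 0 := by
  have hγ : HasDerivAt (fun t : ℝ => NormedSpace.exp (t • H) x) (H x) 0 := by
    simpa using (hasDerivAt_exp_smul_const (𝕂 := ℝ) H 0).clm_apply (hasDerivAt_const 0 x)
  have hAγ := A.hasFDerivAt.comp_hasDerivAt 0 hγ
  simpa [add_comm] using
    Q.toContinuousBilinearMap.hasDerivAt_of_bilinear (fun _ => hγ) (fun _ => hAγ)

variable {Q : V →ₗ[ℝ] V →ₗ[ℝ] ℝ} {Ω : Set V} {H : V →L[ℝ] V}

theorem bilin_apply_add_eq_zero_of_exp_flow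
    (hflow : ∀ t : ℝ, ∀ x ∈ Ω, ∃ a : ℝ, a ≠ 0 ∧ a • NormedSpace.exp (t • H) x ∈ Ω)
    {A : V →L[ℝ] V} (hA : ∀ z ∈ Ω, Q z (A z) = 0) {x : V} (hx : x ∈ Ω) :
    Q (H x) (A x) + Q x (A (H x)) = 0 := by
  have horbit : ∀ t : ℝ,
      Q (NormedSpace.exp (t • H) x) (A (NormedSpace.exp (t • H) x)) = 0 := by
    intro t
    obtain ⟨a, ha, hmem⟩ := hflow t x hx
    -- `Q (a • y) (A (a • y)) = a ^ 2 * Q y (A y)`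
    simpa [ha] using hA _ hmem
  refine (hasDerivAt_bilin_exp_smul_apply Q A H x).unique ?_
  simpa only [horbit] using hasDerivAt_const (0 : ℝ) (0 : ℝ)

theorem eq_smul_one_of_bilin_div_self_eq
    (hpos : ∀ x : V, x ≠ 0 → 0 < Q x x)
    (hΩ0 : (0 : V) ∉ Ω) (hΩspan : Submodule.span ℝ Ω = ⊤)
    (hsa : ∀ x y, Q x (H y) = Q (H x) y)
    (hflow : ∀ t : ℝ, ∀ x ∈ Ω, ∃ a : ℝ, a ≠ 0 ∧ a • NormedSpace.exp (t • H) x ∈ Ω)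
    {c : ℝ} (hc : ∀ x ∈ Ω, Q x (H x) / Q x x = c) :
    H = c • (1 : V →L[ℝ] V) := by
  set A := H - c • (1 : V →L[ℝ] V)
  have hA_apply : ∀ v, A v = H v - c • v := fun v => rfl
  have hA_Ω : ∀ x ∈ Ω, Q x (A x) = 0 := by
    intro x hx
    have hQx : Q x x ≠ 0 := (hpos x (ne_of_mem_of_not_mem hx hΩ0)).ne'
    simp [hA_apply, (div_eq_iff hQx).1 (hc x hx)]
  have hA_zero : ∀ x ∈ Ω, A x = 0 := by
    intro x hx
    have hA_sa : Q x (A (H x)) = Q (H x) (A x) := by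
      simp only [hA_apply, map_sub, map_smul, hsa]
    have hHA : Q (H x) (A x) = Q (A x) (A x) := by
      have hHx : H x = A x + c • x := by simp [hA_apply]
      rw [hHx, map_add, map_smul, LinearMap.add_apply, LinearMap.smul_apply, hA_Ω x hx,
        smul_zero, add_zero]
    by_contra hne
    linarith [hpos _ hne, bilin_apply_add_eq_zero_of_exp_flow hflow hA_Ω hx]
  have hA0 : A = 0 :=
    ContinuousLinearMap.coe_injective (LinearMap.ext_on hΩspan fun x hx => by simp [hA_zero x hx])
  exact sub_eq_zero.1 hA0

end

theorem weighted_two_two_design_perfect_general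
    {V : Type*} [NormedAddCommGroup V] [NormedSpace ℝ V] [FiniteDimensional ℝ V]
    [MeasurableSpace V] [BorelSpace V]
    (Q : V →ₗ[ℝ] V →ₗ[ℝ] ℝ)
    (hpos : ∀ x : V, x ≠ 0 → 0 < Q x x)
    (Ω : Set V) (hΩ0 : (0 : V) ∉ Ω) (hΩcomp : IsCompact Ω)
    (hΩspan : Submodule.span ℝ Ω = ⊤)
    (μ : Measure V) [IsProbabilityMeasure μ]
    (hsupp : ∀ U : Set V, IsOpen U → (U ∩ Ω).Nonempty → 0 < μ (U ∩ Ω))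
    (𝔭 : Submodule ℝ (V →L[ℝ] V))
    (hsa : ∀ J ∈ 𝔭, ∀ x y, Q x (J y) = Q (J x) y)
    (hid : ∀ c : ℝ, c • (1 : V →L[ℝ] V) ∈ 𝔭 → c = 0)
    (hexp : ∀ J ∈ 𝔭, ∀ t : ℝ, ∀ x ∈ Ω,
        ∃ c : ℝ, c ≠ 0 ∧ c • (NormedSpace.exp (t • J) x) ∈ Ω)
    (X : Finset V) (hXΩ : ↑X ⊆ Ω)
    (W : V → ℝ)
    (hdesign : ∀ H₁ ∈ 𝔭 ⊔ Submodule.span ℝ {(1 : V →L[ℝ] V)},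
        ∀ H₂ ∈ 𝔭 ⊔ Submodule.span ℝ {(1 : V →L[ℝ] V)},
        ∑ x ∈ X, W x * ((Q x (H₁ x) / Q x x) * (Q x (H₂ x) / Q x x)) =
          ∫ x in Ω, (Q x (H₁ x) / Q x x) * (Q x (H₂ x) / Q x x) ∂μ) :
    ∀ H ∈ 𝔭, ∀ c : ℝ, (∀ x ∈ X, Q x (H x) / Q x x = c) →
      H = c • (1 : V →L[ℝ] V) ∧ H = 0 ∧ c = 0 := by
  intro H hH c hc
  have hQΩ : ∀ x ∈ Ω, Q x x ≠ 0 := fun x hx => (hpos x (ne_of_mem_of_not_mem hx hΩ0)).ne'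
  set A := H - c • (1 : V →L[ℝ] V)
  have hA : A ∈ 𝔭 ⊔ Submodule.span ℝ {(1 : V →L[ℝ] V)} :=
    sub_mem (Submodule.mem_sup_left hH)
      (Submodule.mem_sup_right (Submodule.smul_mem _ c (Submodule.mem_span_singleton_self _)))
  set r : V → ℝ := fun x => Q x (A x) / Q x x
  have hr : ∀ x ∈ Ω, r x = Q x (H x) / Q x x - c := fun x hx => by
    simp [r, A, sub_div, mul_div_cancel_right₀ _ (hQΩ x hx)]
  have hr_cont : ContinuousOn (fun x => r x * r x) Ω :=
    have hr_cont' : ContinuousOn r Ω :=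
      (Q.toContinuousBilinearMap.continuous.clm_apply A.continuous).continuousOn.div
        (Q.toContinuousBilinearMap.continuous.clm_apply continuous_id).continuousOn hQΩ
    hr_cont'.mul hr_cont'
  have hr_int : ∫ x in Ω, r x * r x ∂μ = 0 := by
    rw [← hdesign A hA A hA]
    refine Finset.sum_eq_zero fun x hx => ?_
    change W x * (r x * r x) = 0
    rw [hr x (hXΩ hx), hc x hx, sub_self, mul_zero, mul_zero]
  have hrΩ : ∀ x ∈ Ω, Q x (H x) / Q x x = c := fun x hx => by
    have hrx := eqOn_zero_of_setIntegral_eq_zero_of_nonneg hΩcomp.measurableSet hsupp hr_cont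
      (hr_cont.integrableOn_compact hΩcomp) (fun x _ => mul_self_nonneg (r x)) hr_int hx
    rwa [Pi.zero_apply, mul_self_eq_zero, hr x hx, sub_eq_zero] at hrx
  have hHc : H = c • (1 : V →L[ℝ] V) :=
    eq_smul_one_of_bilin_div_self_eq hpos hΩ0 hΩspan (hsa H hH) (hexp H hH) hrΩ
  have hc0 : c = 0 := hid c (hHc ▸ hH)
  exact ⟨hHc, by rw [hHc, hc0, zero_smul], hc0⟩

/-- A weighted design of strength `{2,2}` on `Ω` is perfect: if `H ∈ 𝔭`
satisfies `Q(x,Hx)/Q(x) = c` on `X`, then `H = c·id`, hence `H = 0` and `c = 0`. -/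
theorem weighted_two_two_design_perfect
    {V : Type*} [NormedAddCommGroup V] [NormedSpace ℝ V] [FiniteDimensional ℝ V]
    [MeasurableSpace V] [BorelSpace V]
    (Q : V →ₗ[ℝ] V →ₗ[ℝ] ℝ)
    (hsymm : ∀ x y, Q x y = Q y x) (hpos : ∀ x : V, x ≠ 0 → 0 < Q x x)
    (Ω : Set V) (hΩ0 : (0 : V) ∉ Ω) (hΩcomp : IsCompact Ω)
    (hΩspan : Submodule.span ℝ Ω = ⊤)
    (μ : Measure V) [IsProbabilityMeasure μ] (hμΩ : μ Ω = 1)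
    (hsupp : ∀ U : Set V, IsOpen U → (U ∩ Ω).Nonempty → 0 < μ (U ∩ Ω))
    (𝔭 : Submodule ℝ (V →L[ℝ] V))
    (hsa : ∀ J ∈ 𝔭, ∀ x y, Q x (J y) = Q (J x) y)
    (hid : ∀ c : ℝ, c • (1 : V →L[ℝ] V) ∈ 𝔭 → c = 0)
    (hexp : ∀ J ∈ 𝔭, ∀ t : ℝ, ∀ x ∈ Ω,
        ∃ c : ℝ, c ≠ 0 ∧ c • (NormedSpace.exp (t • J) x) ∈ Ω)
    (X : Finset V) (hXne : X.Nonempty) (hXΩ : ↑X ⊆ Ω)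
    (W : V → ℝ) (hWpos : ∀ x ∈ X, 0 < W x) (hWsum : ∑ x ∈ X, W x = 1)
    (hdesign : ∀ H₁ ∈ 𝔭 ⊔ Submodule.span ℝ {(1 : V →L[ℝ] V)},
        ∀ H₂ ∈ 𝔭 ⊔ Submodule.span ℝ {(1 : V →L[ℝ] V)},
        ∑ x ∈ X, W x * ((Q x (H₁ x) / Q x x) * (Q x (H₂ x) / Q x x)) =
          ∫ x in Ω, (Q x (H₁ x) / Q x x) * (Q x (H₂ x) / Q x x) ∂μ) :
    ∀ H ∈ 𝔭, ∀ c : ℝ, (∀ x ∈ X, Q x (H x) / Q x x = c) →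
      H = c • (1 : V →L[ℝ] V) ∧ H = 0 ∧ c = 0 :=
  weighted_two_two_design_perfect_general Q hpos Ω hΩ0 hΩcomp hΩspan μ hsupp 𝔭 hsa hid hexp X hXΩ W
    hdesign
end

section
/- Second-order expansion of the Epstein zeta function: let Q be a positive definite quadratic form, Z a closed discrete subset of V∖{0}, s real with absolute convergence of ζ(Q,Z,s), and H a Q-selfadjoint endomorphism. Set Q_H(x) = Q(x, exp(H)x). Then ζ(Q_H, Z, s) = Σ_{x∈Z} Q(x)^{−s}·(1 − s·Q(x,Hx)/Q(x) + (s²/2)·Q(x,Hx)²/Q(x)² − (s/2)·(Q(Hx)/Q(x) − Q(x,Hx)²/Q(x)²) + O(‖H‖_Q³)), where the error term is uniform in x. -/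
/-!
Write `q = Q(x)`, `a = Q(x, Hx)`, `b = Q(Hx, Hx)` and `T = Q(x, e^H x)`. Cauchy–Schwarz and
self-adjointness give `|Q(x, Hⁿx)| ≤ ηⁿ q`, so the exponential series yields
`|T - (q + a + b/2)| ≤ η³ q` and `T ≤ e^η q`; since `T = Q(e^{H/2}x, e^{H/2}x)`, the same bound
for `-H` gives `e^{-η} q ≤ T`. Thus `T/q` stays in `[e⁻¹, e]`, where `u ↦ u^{-s}` has a Taylor
expansion at `1` with uniform cubic remainder, and substituting `T/q - 1 = a/q + b/(2q) + O(η³)`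
gives the expansion termwise with a constant independent of `x`.
-/

open scoped Nat
open Set

lemma abs_le_mul_abs_pow_of_hasDerivAt {f f' : ℝ → ℝ} {t C : ℝ} {n : ℕ} (hC : 0 ≤ C)
    (hf : ∀ y ∈ uIcc 0 t, HasDerivAt f (f' y) y) (hf' : ∀ y ∈ uIcc 0 t, |f' y| ≤ C * |y| ^ n)
    (h0 : f 0 = 0) : ∀ y ∈ uIcc 0 t, |f y| ≤ C * |y| ^ (n + 1) := by
  intro y hy
  have hsub : uIcc 0 y ⊆ uIcc 0 t := uIcc_subset_uIcc_left hy
  have hbound : ∀ z ∈ uIcc 0 y, ‖f' z‖ ≤ C * |y| ^ n := fun z hz => by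
    have hzy : |z| ≤ |y| := by simpa using abs_sub_left_of_mem_uIcc hz
    calc ‖f' z‖ = |f' z| := rfl
      _ ≤ C * |z| ^ n := hf' z (hsub hz)
      _ ≤ C * |y| ^ n := by gcongr
  have := (convex_uIcc 0 y).norm_image_sub_le_of_norm_hasDerivWithin_le
    (fun z hz => (hf z (hsub hz)).hasDerivWithinAt) hbound left_mem_uIcc right_mem_uIcc
  simpa [h0, pow_succ, mul_assoc] using this

lemma rpow_le_rpow_add_rpow {m M y : ℝ} (c : ℝ) (hm : 0 < m) (hmy : m ≤ y) (hyM : y ≤ M) :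
    y ^ c ≤ m ^ c + M ^ c := by
  have hy : 0 < y := hm.trans_le hmy
  rcases le_total 0 c with hc | hc
  · linarith [Real.rpow_le_rpow hy.le hyM hc, Real.rpow_pos_of_pos hm c]
  · linarith [Real.rpow_le_rpow_of_nonpos hm hmy hc, Real.rpow_pos_of_pos (hy.trans_le hyM) c]

lemma hasDerivAt_one_add_rpow (c : ℝ) {y : ℝ} (hy : 0 < 1 + y) :
    HasDerivAt (fun y => (1 + y) ^ c) (c * (1 + y) ^ (c - 1)) y := by
  simpa using ((hasDerivAt_id y).const_add 1).rpow_const (p := c) (Or.inl hy.ne')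

theorem abs_one_add_rpow_sub_taylor_le (s : ℝ) {m M t : ℝ} (hm : 0 < m) (hm1 : m ≤ 1)
    (hM1 : 1 ≤ M) (hmt : m ≤ 1 + t) (htM : 1 + t ≤ M) :
    |(1 + t) ^ (-s) - (1 - s * t + s * (s + 1) / 2 * t ^ 2)| ≤
      |s * (s + 1)| * (|s + 2| * (m ^ (-s - 3) + M ^ (-s - 3))) * |t| ^ 3 := by
  set B := m ^ (-s - 3) + M ^ (-s - 3)
  have hmem : ∀ y ∈ uIcc 0 t, m ≤ 1 + y ∧ 1 + y ≤ M := fun y hy => by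
    rcases mem_uIcc.1 hy with ⟨h1, h2⟩ | ⟨h1, h2⟩ <;> constructor <;> linarith
  have hpos : ∀ y ∈ uIcc 0 t, 0 < 1 + y := fun y hy => hm.trans_le (hmem y hy).1
  have hB : 0 ≤ B := by positivity
  have h₀ : ∀ y ∈ uIcc 0 t, |(1 + y) ^ (-s - 2) - 1| ≤ |s + 2| * B * |y| ^ (0 + 1) := by
    refine abs_le_mul_abs_pow_of_hasDerivAt (f' := fun y => (-s - 2) * (1 + y) ^ (-s - 3))
      (by positivity) (fun y hy => ?_) (fun y hy => ?_) (by simp)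
    · exact ((hasDerivAt_one_add_rpow (-s - 2) (hpos y hy)).sub_const 1).congr_deriv
        (by rw [show -s - 2 - 1 = -s - 3 by ring])
    · rw [pow_zero, mul_one, abs_mul, abs_of_pos (Real.rpow_pos_of_pos (hpos y hy) _),
        show -s - 2 = -(s + 2) by ring, abs_neg]
      exact mul_le_mul_of_nonneg_left
        (rpow_le_rpow_add_rpow _ hm (hmem y hy).1 (hmem y hy).2) (abs_nonneg _)
  have h₁ : ∀ y ∈ uIcc 0 t, |-s * ((1 + y) ^ (-s - 1) - 1) - s * (s + 1) * y| ≤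
      |s * (s + 1)| * (|s + 2| * B) * |y| ^ (1 + 1) := by
    refine abs_le_mul_abs_pow_of_hasDerivAt
      (f' := fun y => s * (s + 1) * ((1 + y) ^ (-s - 2) - 1))
      (by positivity) (fun y hy => ?_) (fun y hy => ?_) (by simp)
    · exact ((((hasDerivAt_one_add_rpow (-s - 1) (hpos y hy)).sub_const 1).const_mul (-s)).sub
        ((hasDerivAt_id y).const_mul (s * (s + 1)))).congr_deriv
        (by rw [show -s - 1 - 1 = -s - 2 by ring]; ring)
    · rw [abs_mul, mul_assoc]
      exact mul_le_mul_of_nonneg_left (h₀ y hy) (abs_nonneg _)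
  have h₂ := abs_le_mul_abs_pow_of_hasDerivAt
      (f := fun y => (1 + y) ^ (-s) - (1 - s * y + s * (s + 1) / 2 * y ^ 2))
      (f' := fun y => -s * ((1 + y) ^ (-s - 1) - 1) - s * (s + 1) * y)
      (by positivity) (fun y hy => ?_) h₁ (by simp) t right_mem_uIcc
  · exact h₂
  · exact ((hasDerivAt_one_add_rpow (-s) (hpos y hy)).sub
      ((((hasDerivAt_id y).const_mul s).const_sub 1).add
        ((hasDerivAt_pow 2 y).const_mul (s * (s + 1) / 2)))).congr_deriv (by push_cast; ring)

noncomputable def expansionFactor (s α β : ℝ) : ℝ :=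
  1 - s * α + s ^ 2 / 2 * α ^ 2 - s / 2 * (β - α ^ 2)

lemma abs_sub_expansionFactor_le {s K η P t α β : ℝ} (hK : 0 ≤ K) (hη0 : 0 ≤ η) (hη1 : η ≤ 1)
    (hP : |P - (1 - s * t + s * (s + 1) / 2 * t ^ 2)| ≤ K * |t| ^ 3)
    (hα : |α| ≤ η) (hβ : |β| ≤ η ^ 2) (ht : |t - α - β / 2| ≤ η ^ 3) :
    |P - expansionFactor s α β| ≤ (27 * K + |s| + 4 * |s * (s + 1)|) * η ^ 3 := by
  have hη32 : η ^ 3 ≤ η ^ 2 := pow_le_pow_of_le_one hη0 hη1 (by norm_num)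
  have hη21 : η ^ 2 ≤ η := pow_le_of_le_one hη0 hη1 (by norm_num)
  obtain ⟨hα₁, hα₂⟩ := abs_le.1 hα
  obtain ⟨hβ₁, hβ₂⟩ := abs_le.1 hβ
  obtain ⟨ht₁, ht₂⟩ := abs_le.1 ht
  have ht_abs : |t| ≤ 3 * η := abs_le.2 ⟨by linarith, by linarith⟩
  have hsq : |t ^ 2 - α ^ 2| ≤ 8 * η ^ 3 := by
    have hsub : |t - α| ≤ 2 * η ^ 2 := abs_le.2 ⟨by linarith, by linarith⟩
    have hadd : |t + α| ≤ 4 * η := abs_le.2 ⟨by linarith, by linarith⟩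
    calc |t ^ 2 - α ^ 2| = |t - α| * |t + α| := by rw [← abs_mul]; ring_nf
      _ ≤ 2 * η ^ 2 * (4 * η) := by gcongr
      _ = 8 * η ^ 3 := by ring
  have hcube : |t| ^ 3 ≤ 27 * η ^ 3 := by
    calc |t| ^ 3 ≤ (3 * η) ^ 3 := by gcongr
      _ = 27 * η ^ 3 := by ring
  calc |P - expansionFactor s α β|
      = |(P - (1 - s * t + s * (s + 1) / 2 * t ^ 2)) + (-s * (t - α - β / 2))
          + s * (s + 1) / 2 * (t ^ 2 - α ^ 2)| := by unfold expansionFactor; ring_nf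
    _ ≤ K * |t| ^ 3 + |s| * η ^ 3 + |s * (s + 1)| / 2 * (8 * η ^ 3) := by
      refine (abs_add_three _ _ _).trans (add_le_add_three hP ?_ ?_)
      · rw [abs_mul, abs_neg]; gcongr
      · rw [abs_mul, abs_div, abs_two]; gcongr
    _ ≤ (27 * K + |s| + 4 * |s * (s + 1)|) * η ^ 3 := by nlinarith

theorem exists_abs_rpow_div_sub_expansionFactor_le (s : ℝ) :
    ∃ C : ℝ, 0 < C ∧ ∀ {η q T a b : ℝ}, 0 ≤ η → η ≤ 1 → 0 < q →
      Real.exp (-η) * q ≤ T → T ≤ Real.exp η * q → |a| ≤ η * q → 0 ≤ b → b ≤ η ^ 2 * q →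
      |T - (q + a + b / 2)| ≤ η ^ 3 * q →
      |(T / q) ^ (-s) - expansionFactor s (a / q) (b / q)| ≤ C * η ^ 3 := by
  set K := |s * (s + 1)| * (|s + 2| * (Real.exp (-1) ^ (-s - 3) + Real.exp 1 ^ (-s - 3)))
  have hK : 0 ≤ K := by positivity
  refine ⟨27 * K + |s| + 4 * |s * (s + 1)| + 1, by positivity, ?_⟩
  intro η q T a b hη0 hη1 hq hTlo hThi ha hb0 hb htail
  have hτ : T / q = 1 + (T / q - 1) := by ring
  have hlo : Real.exp (-1) ≤ 1 + (T / q - 1) := by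
    rw [← hτ, le_div_iff₀ hq]
    exact (mul_le_mul_of_nonneg_right (Real.exp_le_exp.2 (by linarith)) hq.le).trans hTlo
  have hhi : 1 + (T / q - 1) ≤ Real.exp 1 := by
    rw [← hτ, div_le_iff₀ hq]
    exact hThi.trans (mul_le_mul_of_nonneg_right (Real.exp_le_exp.2 hη1) hq.le)
  have hTaylor := abs_one_add_rpow_sub_taylor_le s (Real.exp_pos _) (by simp) (by simp) hlo hhi
  rw [← hτ] at hTaylor
  have hα : |a / q| ≤ η := by rwa [abs_div, abs_of_pos hq, div_le_iff₀ hq]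
  have hβ : |b / q| ≤ η ^ 2 := by
    rw [abs_of_nonneg (div_nonneg hb0 hq.le), div_le_iff₀ hq]; exact hb
  have ht : |T / q - 1 - a / q - b / q / 2| ≤ η ^ 3 := by
    rw [show T / q - 1 - a / q - b / q / 2 = (T - (q + a + b / 2)) / q by field_simp; ring,
      abs_div, abs_of_pos hq, div_le_iff₀ hq]
    exact htail
  calc _ ≤ (27 * K + |s| + 4 * |s * (s + 1)|) * η ^ 3 :=
        abs_sub_expansionFactor_le hK hη0 hη1 hTaylor hα hβ ht
    _ ≤ _ := mul_le_mul_of_nonneg_right (by linarith) (by positivity)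

lemma abs_sub_sum_range_le_of_hasSum_exp {c : ℕ → ℝ} {S η A : ℝ}
    (hS : HasSum (fun n => (n ! : ℝ)⁻¹ * c n) S) (hc : ∀ n, |c n| ≤ η ^ n * A) (k : ℕ) :
    |S - ∑ n ∈ Finset.range k, (n ! : ℝ)⁻¹ * c n| ≤
      (Real.exp η - ∑ n ∈ Finset.range k, η ^ n / n !) * A := by
  have hexp : HasSum (fun n => η ^ n / n ! * A) (Real.exp η * A) := by
    rw [Real.exp_eq_exp_ℝ]
    exact (NormedSpace.expSeries_div_hasSum_exp η).mul_right A
  rw [sub_mul, Finset.sum_mul]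
  refine ((hasSum_nat_add_iff' k).2 hS).norm_le_of_bounded ((hasSum_nat_add_iff' k).2 hexp)
    fun n => ?_
  rw [Real.norm_eq_abs, abs_mul, abs_of_pos (by positivity), inv_mul_eq_div, div_mul_eq_mul_div]
  gcongr
  exact hc _

lemma exp_sub_sum_range_three_le {η : ℝ} (hη0 : 0 ≤ η) (hη1 : η ≤ 1) :
    Real.exp η - ∑ n ∈ Finset.range 3, η ^ n / n ! ≤ η ^ 3 := by
  have := Real.exp_bound (x := η) (by rwa [abs_of_nonneg hη0]) (n := 3) (by norm_num)
  rw [abs_of_nonneg hη0] at this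
  norm_num [Nat.factorial] at this
  nlinarith [(abs_le.1 this).2, pow_nonneg hη0 3]

section

variable {V : Type*} [NormedAddCommGroup V] [NormedSpace ℝ V]

lemma hasSum_exp_apply [CompleteSpace V] (K : V →L[ℝ] V) (v : V) :
    HasSum (fun n => (n ! : ℝ)⁻¹ • (K ^ n) v) (NormedSpace.exp K v) :=
  (NormedSpace.exp_series_hasSum_exp' (𝕂 := ℝ) K).mapL (ContinuousLinearMap.apply ℝ V v)

-- `NormedSpace.exp_add_of_commute` asks for a `NormedAlgebra ℚ` structure that `V →L[ℝ] V` lacks.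
lemma exp_add_of_commute_real [CompleteSpace V] {A B : V →L[ℝ] V} (h : Commute A B) :
    NormedSpace.exp (A + B) = NormedSpace.exp A * NormedSpace.exp B := by
  have hball : ∀ C : V →L[ℝ] V,
      C ∈ Metric.eball 0 (NormedSpace.expSeries ℝ (V →L[ℝ] V)).radius := fun C =>
    (NormedSpace.expSeries_radius_eq_top ℝ (V →L[ℝ] V)).symm ▸ edist_lt_top _ _
  exact NormedSpace.exp_add_of_commute_of_mem_ball h (hball A) (hball B)

lemma LinearMap.hasSum_apply_exp_apply [FiniteDimensional ℝ V] (ℓ : V →ₗ[ℝ] ℝ) (K : V →L[ℝ] V)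
    (v : V) :
    HasSum (fun n => (n ! : ℝ)⁻¹ * ℓ ((K ^ n) v)) (ℓ (NormedSpace.exp K v)) := by
  have := FiniteDimensional.complete ℝ V
  simpa using (hasSum_exp_apply K v).mapL (LinearMap.toContinuousLinearMap ℓ)

variable {Q : V →ₗ[ℝ] V →ₗ[ℝ] ℝ} {K : V →L[ℝ] V}

lemma LinearMap.IsSelfAdjoint.pow (hK : Q.IsSelfAdjoint K) (n : ℕ) :
    Q.IsSelfAdjoint ⇑(K ^ n) := by
  induction n with
  | zero => exact LinearMap.isAdjointPair_id
  | succ n ih =>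
    intro x y
    calc Q ((K ^ (n + 1)) x) y = Q (K ((K ^ n) x)) y := by rw [pow_succ']; rfl
      _ = Q x ((K ^ n) (K y)) := by rw [hK, ih]
      _ = Q x ((K ^ (n + 1)) y) := by rw [pow_succ]; rfl

lemma apply_pow_apply_pow_le {c : ℝ} (hc : 0 ≤ c) (hKc : ∀ v, Q (K v) (K v) ≤ c * Q v v)
    (n : ℕ) (v : V) : Q ((K ^ n) v) ((K ^ n) v) ≤ c ^ n * Q v v := by
  induction n with
  | zero => simp
  | succ n ih =>
    calc Q ((K ^ (n + 1)) v) ((K ^ (n + 1)) v) = Q (K ((K ^ n) v)) (K ((K ^ n) v)) := by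
          rw [pow_succ']; rfl
      _ ≤ c * (c ^ n * Q v v) := (hKc _).trans (mul_le_mul_of_nonneg_left ih hc)
      _ = c ^ (n + 1) * Q v v := by ring

lemma abs_apply_pow_apply_le (hQ : ∀ v, 0 ≤ Q v v) (hK : Q.IsSelfAdjoint K) {η : ℝ}
    (hη : 0 ≤ η) (hKη : ∀ v, Q (K v) (K v) ≤ η ^ 2 * Q v v) (n : ℕ) (v : V) :
    |Q v ((K ^ n) v)| ≤ η ^ n * Q v v := by
  refine abs_le_of_sq_le_sq ?_ (by have := hQ v; positivity)
  calc Q v ((K ^ n) v) ^ 2 = Q v ((K ^ n) v) * Q ((K ^ n) v) v := by rw [hK.pow, sq]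
    _ ≤ Q v v * Q ((K ^ n) v) ((K ^ n) v) :=
      LinearMap.BilinForm.apply_mul_apply_le_of_forall_zero_le Q hQ _ _
    _ ≤ Q v v * ((η ^ 2) ^ n * Q v v) :=
      mul_le_mul_of_nonneg_left (apply_pow_apply_pow_le (by positivity) hKη n v) (hQ v)
    _ = (η ^ n * Q v v) ^ 2 := by ring

variable [FiniteDimensional ℝ V]

lemma LinearMap.IsSelfAdjoint.exp (hK : Q.IsSelfAdjoint K) :
    Q.IsSelfAdjoint ⇑(NormedSpace.exp K) := fun v w =>
  ((Q.flip w).hasSum_apply_exp_apply K v).unique <| by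
    convert (Q v).hasSum_apply_exp_apply K w using 2 with n
    exact congrArg _ (hK.pow n v w)

lemma apply_exp_apply_le (hQ : ∀ v, 0 ≤ Q v v) (hK : Q.IsSelfAdjoint K) {η : ℝ}
    (hη : 0 ≤ η) (hKη : ∀ v, Q (K v) (K v) ≤ η ^ 2 * Q v v) (v : V) :
    Q v (NormedSpace.exp K v) ≤ Real.exp η * Q v v := by
  have := abs_sub_sum_range_le_of_hasSum_exp ((Q v).hasSum_apply_exp_apply K v)
    (abs_apply_pow_apply_le hQ hK hη hKη · v) 0
  simp only [Finset.range_zero, Finset.sum_empty, sub_zero] at this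
  exact (le_abs_self _).trans this

lemma abs_apply_exp_apply_sub_le (hQ : ∀ v, 0 ≤ Q v v) (hK : Q.IsSelfAdjoint K) {η : ℝ}
    (hη0 : 0 ≤ η) (hη1 : η ≤ 1) (hKη : ∀ v, Q (K v) (K v) ≤ η ^ 2 * Q v v) (v : V) :
    |Q v (NormedSpace.exp K v) - (Q v v + Q v (K v) + Q (K v) (K v) / 2)| ≤ η ^ 3 * Q v v := by
  have hsum : ∑ n ∈ Finset.range 3, (n ! : ℝ)⁻¹ * Q v ((K ^ n) v) =
      Q v v + Q v (K v) + Q (K v) (K v) / 2 := by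
    simp only [Finset.sum_range_succ, Finset.range_one, Finset.sum_singleton, pow_apply_eq_iterate,
      Function.iterate_zero, Function.iterate_succ, Function.comp_apply, id_eq, ← hK v (K v),
      Nat.factorial_zero, Nat.factorial_one, Nat.factorial_two, Nat.cast_one, Nat.cast_ofNat]
    ring
  rw [← hsum]
  exact (abs_sub_sum_range_le_of_hasSum_exp ((Q v).hasSum_apply_exp_apply K v)
    (abs_apply_pow_apply_le hQ hK hη0 hKη · v) 3).trans
    (mul_le_mul_of_nonneg_right (exp_sub_sum_range_three_le hη0 hη1) (hQ v))

lemma exp_neg_mul_le_apply_exp_apply (hQ : ∀ v, 0 ≤ Q v v) (hK : Q.IsSelfAdjoint K) {η : ℝ}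
    (hη : 0 ≤ η) (hKη : ∀ v, Q (K v) (K v) ≤ η ^ 2 * Q v v) (v : V) :
    Real.exp (-η) * Q v v ≤ Q v (NormedSpace.exp K v) := by
  have := FiniteDimensional.complete ℝ V
  -- With `A = K / 2` and `u = e^A v`: `Q(v, e^K v) = Q(u, u)` and `Q(v, v) = Q(u, e^{-K} u)`.
  set A : V →L[ℝ] V := (2⁻¹ : ℝ) • K
  have hA : Q.IsSelfAdjoint A := hK.smul _
  have hAA : NormedSpace.exp A * NormedSpace.exp A = NormedSpace.exp K := by
    rw [← exp_add_of_commute_real (Commute.refl A), ← two_smul ℝ A, smul_smul]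
    norm_num
  have hA' : Q.IsSelfAdjoint ⇑(-A) := fun x y => by simp [hA x y]
  have hAA' : NormedSpace.exp (-A) * NormedSpace.exp (-A) = NormedSpace.exp (-K) := by
    rw [← exp_add_of_commute_real (Commute.refl (-A)), ← neg_add, ← two_smul ℝ A, smul_smul]
    norm_num
  have hinv : NormedSpace.exp (-A) * NormedSpace.exp A = 1 := by
    rw [← exp_add_of_commute_real (Commute.refl A).neg_left, neg_add_cancel, NormedSpace.exp_zero]
  set u := NormedSpace.exp A v
  have hv : Q v (NormedSpace.exp K v) = Q u u := by
    rw [← hAA, mul_apply_eq_comp, ← hA.exp]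
  have hvu : NormedSpace.exp (-A) u = v := by
    rw [← mul_apply_eq_comp, hinv, one_apply_eq_self]
  have hu : Q v v = Q u (NormedSpace.exp (-K) u) := by
    rw [← hAA', mul_apply_eq_comp, ← hA'.exp, hvu]
  have hK' : Q.IsSelfAdjoint ⇑(-K) := fun x y => by simp [hK x y]
  have hKη' : ∀ v, Q ((-K) v) ((-K) v) ≤ η ^ 2 * Q v v := by simpa using hKη
  rw [hv, hu, Real.exp_neg, inv_mul_le_iff₀ (Real.exp_pos η)]
  exact apply_exp_apply_le hQ hK' hη hKη' u

end

theorem epstein_zeta_second_order_expansion_general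
    {V : Type*} [NormedAddCommGroup V] [NormedSpace ℝ V] [FiniteDimensional ℝ V]
    (Q : V →ₗ[ℝ] V →ₗ[ℝ] ℝ)
    (hpos : ∀ x : V, x ≠ 0 → 0 < Q x x)
    (Z : Set V)
    (hZ0 : (0 : V) ∉ Z)
    (s : ℝ) :
    ∃ C : ℝ, 0 < C ∧ ∀ η : ℝ, 0 ≤ η → η ≤ 1 →
      ∀ H : V →L[ℝ] V, (∀ x y, Q x (H y) = Q (H x) y) →
        (∀ x, Q (H x) (H x) ≤ η ^ 2 * Q x x) →
        ∃ r : V → ℝ, (∀ x ∈ Z, |r x| ≤ C * η ^ 3) ∧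
          (∑' x : Z, (Q x (NormedSpace.exp H x) : ℝ) ^ (-s)) =
            ∑' x : Z, ((Q x x : ℝ) ^ (-s)) *
              (1 - s * (Q x (H x) / Q x x)
                + s ^ 2 / 2 * (Q x (H x) / Q x x) ^ 2
                - s / 2 * (Q (H x) (H x) / Q x x - (Q x (H x) / Q x x) ^ 2)
                + r x) := by
  obtain ⟨C, hC0, hC⟩ := exists_abs_rpow_div_sub_expansionFactor_le s
  refine ⟨C, hC0, fun η hη0 hη1 H hH hHη => ?_⟩
  have hQ : ∀ v, 0 ≤ Q v v := fun v => by
    rcases eq_or_ne v 0 with rfl | hv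
    · simp
    · exact (hpos v hv).le
  have hH' : Q.IsSelfAdjoint H := fun x y => (hH x y).symm
  have hq : ∀ x ∈ Z, 0 < Q x x := fun x hx => hpos x (ne_of_mem_of_not_mem hx hZ0)
  have hlo := exp_neg_mul_le_apply_exp_apply hQ hH' hη0 hHη
  refine ⟨fun x => (Q x (NormedSpace.exp H x) / Q x x) ^ (-s) -
      expansionFactor s (Q x (H x) / Q x x) (Q (H x) (H x) / Q x x),
    fun x hx => ?_, tsum_congr fun x => ?_⟩
  · exact hC hη0 hη1 (hq x hx) (hlo x) (apply_exp_apply_le hQ hH' hη0 hHη x)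
      (by simpa using abs_apply_pow_apply_le hQ hH' hη0 hHη 1 x) (hQ _) (hHη x)
      (abs_apply_exp_apply_sub_le hQ hH' hη0 hη1 hHη x)
  · have hqx := hq x x.2
    have hTx : 0 < Q x (NormedSpace.exp H x) := (mul_pos (Real.exp_pos _) hqx).trans_le (hlo x)
    simp only [expansionFactor, add_sub_cancel]
    rw [Real.div_rpow hTx.le hqx.le, mul_div_cancel₀ _ (Real.rpow_pos_of_pos hqx _).ne']

/-- Second-order expansion of the Epstein zeta function: with
`Q_H(x) = Q(x, exp(H)x)`, for `Q`-selfadjoint `H` with `‖H‖_Q ≤ η ≤ 1` one has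
`ζ(Q_H,Z,s) = Σ_{x∈Z} Q(x)^{−s}·(1 − s·Q(x,Hx)/Q(x) + (s²/2)·(Q(x,Hx)/Q(x))²
  − (s/2)·(Q(Hx)/Q(x) − (Q(x,Hx)/Q(x))²) + r(x))`, where `|r(x)| ≤ C·η³`
uniformly in `x`. -/
theorem epstein_zeta_second_order_expansion
    {V : Type*} [NormedAddCommGroup V] [NormedSpace ℝ V] [FiniteDimensional ℝ V]
    (Q : V →ₗ[ℝ] V →ₗ[ℝ] ℝ)
    (hsymm : ∀ x y, Q x y = Q y x) (hpos : ∀ x : V, x ≠ 0 → 0 < Q x x)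
    (Z : Set V) (hZclosed : IsClosed Z) (hZdisc : DiscreteTopology Z)
    (hZ0 : (0 : V) ∉ Z)
    (s : ℝ) (hconv : Summable fun x : Z => (Q x x : ℝ) ^ (-s)) :
    ∃ C : ℝ, 0 < C ∧ ∀ η : ℝ, 0 ≤ η → η ≤ 1 →
      ∀ H : V →L[ℝ] V, (∀ x y, Q x (H y) = Q (H x) y) →
        (∀ x, Q (H x) (H x) ≤ η ^ 2 * Q x x) →
        ∃ r : V → ℝ, (∀ x ∈ Z, |r x| ≤ C * η ^ 3) ∧
          (∑' x : Z, (Q x (NormedSpace.exp H x) : ℝ) ^ (-s)) =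
            ∑' x : Z, ((Q x x : ℝ) ^ (-s)) *
              (1 - s * (Q x (H x) / Q x x)
                + s ^ 2 / 2 * (Q x (H x) / Q x x) ^ 2
                - s / 2 * (Q (H x) (H x) / Q x x - (Q x (H x) / Q x x) ^ 2)
                + r x) :=
  epstein_zeta_second_order_expansion_general Q hpos Z hZ0 s
end
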